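/- arXiv:1502.04803 — 5 statements merged into one kernel-verified Lean document; each statement's English description precedes it below -/
import Mathlib

section
/- (Sunflower Lemma, Erdős–Rado) Let 𝒜 be a family of distinct finite sets, each of cardinality at most d, and let k be a positive integer. If |𝒜| > d!·(k − 1)^d, then 𝒜 contains a sunflower with k petals, i.e., there exist k distinct sets S_1, …, S_k ∈ 𝒜 and a set Y such that S_i ∩ S_j = Y for all i ≠ j. -/
private lemma sunflower_disjoint_case {α : Type*} [DecidableEq α]
    (k : ℕ) (𝒜 𝒟 : Finset (Finset α)) (h𝒟 : 𝒟 ⊆ 𝒜) (hk : k ≤ 𝒟.card)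
    (hdisj : ∀ S ∈ 𝒟, ∀ T ∈ 𝒟, S ≠ T → S ∩ T = ∅) :
    ∃ 𝒮 ⊆ 𝒜, 𝒮.card = k ∧
      ∃ Y : Finset α, ∀ S ∈ 𝒮, ∀ T ∈ 𝒮, S ≠ T → S ∩ T = Y := by
  obtain ⟨𝒮, h𝒮sub, h𝒮card⟩ := Finset.exists_subset_card_eq hk
  exact ⟨𝒮, h𝒮sub.trans h𝒟, h𝒮card, ∅,
    fun S hS T hT hne => hdisj S (h𝒮sub hS) T (h𝒮sub hT) hne⟩

private lemma sunflower_aux {α : Type*} [DecidableEq α] (k : ℕ) (hk : 2 ≤ k) :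
    ∀ d (𝒜 : Finset (Finset α)), (∀ S ∈ 𝒜, S.card ≤ d) →
      𝒜.card > Nat.factorial d * (k - 1) ^ d →
    ∃ 𝒮 ⊆ 𝒜, 𝒮.card = k ∧
      ∃ Y : Finset α, ∀ S ∈ 𝒮, ∀ T ∈ 𝒮, S ≠ T → S ∩ T = Y := by
  intro d
  induction d with
  | zero =>
    intro 𝒜 hcard hbig
    exfalso
    have h1 : 𝒜 ⊆ {∅} := by
      intro S hS
      simp only [Finset.mem_singleton]
      exact Finset.card_eq_zero.mp (Nat.le_zero.mp (hcard S hS))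
    have := Finset.card_le_card h1
    simp at this hbig
    omega
  | succ d IH =>
    intro 𝒜 hcard hbig
    set j := k - 1 with hj
    have hj1 : 1 ≤ j := by omega
    -- 𝒜 without the empty set
    set 𝒜₀ := 𝒜.erase ∅ with h𝒜₀
    -- the collection of pairwise-disjoint subfamilies of 𝒜₀
    set P := 𝒜₀.powerset.filter
      (fun 𝒟 => ∀ S ∈ 𝒟, ∀ T ∈ 𝒟, S ≠ T → S ∩ T = ∅) with hP
    have hPne : P.Nonempty := ⟨∅, by simp [hP]⟩
    obtain ⟨𝒟, h𝒟P, h𝒟max⟩ := P.exists_max_image Finset.card hPne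
    rw [hP, Finset.mem_filter, Finset.mem_powerset] at h𝒟P
    obtain ⟨h𝒟sub, h𝒟disj⟩ := h𝒟P
    have h𝒟subA : 𝒟 ⊆ 𝒜 := h𝒟sub.trans (Finset.erase_subset _ _)
    -- Case A: 𝒟 is big enough
    by_cases hA : k ≤ 𝒟.card
    · exact sunflower_disjoint_case k 𝒜 𝒟 h𝒟subA hA h𝒟disj
    by_cases hA' : ∅ ∈ 𝒜 ∧ k - 1 ≤ 𝒟.card
    · obtain ⟨hEm, hk1⟩ := hA'
      obtain ⟨𝒟', h𝒟'sub, h𝒟'card⟩ := Finset.exists_subset_card_eq hk1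
      have hEmn : ∅ ∉ 𝒟' := fun h => by
        have := h𝒟sub (h𝒟'sub h); simp [h𝒜₀] at this
      refine sunflower_disjoint_case k 𝒜 (insert ∅ 𝒟') ?_ ?_ ?_
      · intro S hS
        rcases Finset.mem_insert.mp hS with h | h
        · exact h ▸ hEm
        · exact h𝒟subA (h𝒟'sub h)
      · rw [Finset.card_insert_of_notMem hEmn, h𝒟'card]; omega
      · intro S hS T hT hne
        rcases Finset.mem_insert.mp hS with h | h
        · subst h; exact Finset.empty_inter T
        rcases Finset.mem_insert.mp hT with h' | h'
        · subst h'; exact Finset.inter_empty S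
        · exact h𝒟disj S (h𝒟'sub h) T (h𝒟'sub h') hne
    -- Case B: pigeonhole
    push_neg at hA hA'
    set X := 𝒟.biUnion id with hX
    -- every nonempty member of 𝒜 meets X
    have hmeet : ∀ S ∈ 𝒜₀, (S ∩ X).Nonempty := by
      intro S hS
      rw [Finset.nonempty_iff_ne_empty]
      intro hSX
      have hSdisj : ∀ T ∈ 𝒟, S ∩ T = ∅ := by
        intro T hT
        apply Finset.eq_empty_of_forall_notMem
        intro x hx
        rw [Finset.mem_inter] at hx
        have : x ∈ S ∩ X := Finset.mem_inter.mpr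
          ⟨hx.1, Finset.mem_biUnion.mpr ⟨T, hT, hx.2⟩⟩
        rw [hSX] at this; simp at this
      have hSne : S ≠ ∅ := by
        intro h; rw [h𝒜₀] at hS; exact (Finset.mem_erase.mp hS).1 h
      have hSnotin : S ∉ 𝒟 := by
        intro h
        have hSX' : S ⊆ X := fun x hx => Finset.mem_biUnion.mpr ⟨S, h, hx⟩
        have : S ∩ X = S := Finset.inter_eq_left.mpr hSX'
        exact hSne (by rw [← this, hSX])
      have hmemP : insert S 𝒟 ∈ P := by
        rw [hP, Finset.mem_filter, Finset.mem_powerset]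
        constructor
        · exact Finset.insert_subset hS h𝒟sub
        · intro A hA₁ B hB₁ hne
          rcases Finset.mem_insert.mp hA₁ with h | h <;>
            rcases Finset.mem_insert.mp hB₁ with h' | h'
          · exact absurd (h.trans h'.symm) hne
          · exact h ▸ hSdisj B h'
          · rw [Finset.inter_comm]; exact h' ▸ hSdisj A h
          · exact h𝒟disj A h B h' hne
      have := h𝒟max _ hmemP
      rw [Finset.card_insert_of_notMem hSnotin] at this
      omega
    -- bound on |X|
    have hXcard : X.card ≤ 𝒟.card * (d + 1) := by
      calc X.card ≤ ∑ S ∈ 𝒟, (id S).card := Finset.card_biUnion_le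
        _ ≤ ∑ S ∈ 𝒟, (d + 1) := Finset.sum_le_sum fun S hS => hcard S (h𝒟subA hS)
        _ = 𝒟.card * (d + 1) := by rw [Finset.sum_const, smul_eq_mul]
    -- find a popular element x
    have hpop : ∃ x ∈ X, (𝒜.filter (fun S => x ∈ S)).card >
        Nat.factorial d * j ^ d := by
      by_contra hcon
      push_neg at hcon
      have hcover : 𝒜₀ ⊆ X.biUnion (fun x => 𝒜₀.filter (fun S => x ∈ S)) := by
        intro S hS
        obtain ⟨x, hx⟩ := hmeet S hS
        rw [Finset.mem_inter] at hx
        exact Finset.mem_biUnion.mpr ⟨x, hx.2, Finset.mem_filter.mpr ⟨hS, hx.1⟩⟩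
      have h1 : 𝒜₀.card ≤ X.card * (Nat.factorial d * j ^ d) := by
        calc 𝒜₀.card ≤ (X.biUnion (fun x => 𝒜₀.filter (fun S => x ∈ S))).card :=
              Finset.card_le_card hcover
          _ ≤ ∑ x ∈ X, (𝒜₀.filter (fun S => x ∈ S)).card := Finset.card_biUnion_le
          _ ≤ ∑ x ∈ X, Nat.factorial d * j ^ d := Finset.sum_le_sum fun x hx => by
              refine le_trans (Finset.card_le_card ?_) (hcon x hx)
              exact Finset.filter_subset_filter _ (Finset.erase_subset _ _)
          _ = X.card * (Nat.factorial d * j ^ d) := by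
              rw [Finset.sum_const, smul_eq_mul]
      by_cases hEm : ∅ ∈ 𝒜
      · have h𝒟le : 𝒟.card ≤ k - 2 := by have := hA' hEm; omega
        have h𝒜₀card : 𝒜₀.card = 𝒜.card - 1 := Finset.card_erase_of_mem hEm
        have hXle : X.card ≤ (j - 1) * (d + 1) := by
          calc X.card ≤ 𝒟.card * (d + 1) := hXcard
            _ ≤ (j - 1) * (d + 1) := Nat.mul_le_mul_right _ (by omega)
        have hfact : (d + 1).factorial = (d + 1) * d.factorial := rfl
        have key : 𝒜.card ≤ (d+1).factorial * j ^ (d+1) := by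
          have h2 : 𝒜₀.card ≤ (j - 1) * (d + 1) * (Nat.factorial d * j ^ d) :=
            le_trans h1 (Nat.mul_le_mul_right _ hXle)
          have h3 : (j - 1) * (d + 1) * (Nat.factorial d * j ^ d) + 1 ≤
              (d + 1).factorial * j ^ (d + 1) := by
            rw [hfact, pow_succ]
            have hpos : 0 < (d + 1) * d.factorial * j ^ d :=
              Nat.mul_pos (Nat.mul_pos (Nat.succ_pos d) d.factorial_pos)
                (Nat.pow_pos hj1)
            calc (j - 1) * (d + 1) * (Nat.factorial d * j ^ d) + 1
                = (j - 1) * ((d + 1) * d.factorial * j ^ d) + 1 := by ring_nf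
              _ ≤ (j - 1) * ((d + 1) * d.factorial * j ^ d) +
                  (d + 1) * d.factorial * j ^ d := by omega
              _ = j * ((d + 1) * d.factorial * j ^ d) := by
                  rw [← Nat.succ_mul, Nat.succ_eq_add_one, Nat.sub_add_cancel hj1]
              _ = (d + 1) * d.factorial * (j ^ d * j) := by ring
          have h𝒜pos : 1 ≤ 𝒜.card := Finset.card_pos.mpr ⟨∅, hEm⟩
          omega
        omega
      · have h𝒜₀card : 𝒜₀ = 𝒜 := Finset.erase_eq_of_notMem hEm
        have h𝒟le : 𝒟.card ≤ j := by omega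
        have hXle : X.card ≤ j * (d + 1) :=
          le_trans hXcard (Nat.mul_le_mul_right _ h𝒟le)
        have key : 𝒜.card ≤ (d+1).factorial * j ^ (d+1) := by
          rw [← h𝒜₀card]
          calc 𝒜₀.card ≤ j * (d + 1) * (Nat.factorial d * j ^ d) :=
              le_trans h1 (Nat.mul_le_mul_right _ hXle)
            _ = (d+1).factorial * j ^ (d+1) := by
                rw [Nat.factorial_succ, pow_succ]; ring
        omega
    obtain ⟨x, _, hxpop⟩ := hpop
    -- build the reduced family
    set ℬ := (𝒜.filter (fun S => x ∈ S)).image (fun S => S.erase x) with hℬ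
    have hℬcard : ℬ.card = (𝒜.filter (fun S => x ∈ S)).card := by
      rw [hℬ]
      apply Finset.card_image_of_injOn
      intro S hS T hT hST
      rw [Finset.mem_coe, Finset.mem_filter] at hS hT
      simp only at hST
      rw [← Finset.insert_erase hS.2, ← Finset.insert_erase hT.2, hST]
    have hℬsmall : ∀ T ∈ ℬ, T.card ≤ d := by
      intro T hT
      rw [hℬ, Finset.mem_image] at hT
      obtain ⟨S, hS, rfl⟩ := hT
      rw [Finset.mem_filter] at hS
      rw [Finset.card_erase_of_mem hS.2]
      have := hcard S hS.1
      omega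
    have hℬbig : ℬ.card > Nat.factorial d * (k - 1) ^ d := by
      rw [hℬcard]; exact hxpop
    obtain ⟨𝒮', h𝒮'sub, h𝒮'card, Y', hY'⟩ := IH ℬ hℬsmall hℬbig
    have hxnotin : ∀ T ∈ 𝒮', x ∉ T := by
      intro T hT
      have := h𝒮'sub hT
      rw [hℬ, Finset.mem_image] at this
      obtain ⟨S, _, rfl⟩ := this
      exact Finset.notMem_erase x S
    refine ⟨𝒮'.image (fun T => insert x T), ?_, ?_, insert x Y', ?_⟩
    · intro S hS
      rw [Finset.mem_image] at hS
      obtain ⟨T, hT, rfl⟩ := hS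
      have := h𝒮'sub hT
      rw [hℬ, Finset.mem_image] at this
      obtain ⟨S', hS', hS'e⟩ := this
      rw [Finset.mem_filter] at hS'
      rw [← hS'e, Finset.insert_erase hS'.2]
      exact hS'.1
    · rw [Finset.card_image_of_injOn, h𝒮'card]
      intro T₁ h₁ T₂ h₂ he
      rw [Finset.mem_coe] at h₁ h₂
      simp only at he
      rw [← Finset.erase_insert (hxnotin T₁ h₁), ← Finset.erase_insert (hxnotin T₂ h₂), he]
    · intro S hS T hT hne
      rw [Finset.mem_image] at hS hT
      obtain ⟨T₁, h₁, rfl⟩ := hS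
      obtain ⟨T₂, h₂, rfl⟩ := hT
      have hT12 : T₁ ≠ T₂ := fun h => hne (h ▸ rfl)
      rw [← Finset.insert_inter_distrib, hY' T₁ h₁ T₂ h₂ hT12]

/-- **Sunflower Lemma** (Erdős–Rado). Let `𝒜` be a family of distinct finite
sets, each of cardinality at most `d`, and let `k` be a positive integer. If
`|𝒜| > d! * (k - 1)^d`, then `𝒜` contains a sunflower with `k` petals, i.e.,
there are `k` distinct sets in `𝒜` whose pairwise intersections all equal a
common core `Y`. -/
theorem sunflower_lemma {α : Type*} [DecidableEq α] (d k : ℕ) (hk : 0 < k)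
    (𝒜 : Finset (Finset α)) (hcard : ∀ S ∈ 𝒜, S.card ≤ d)
    (hbig : 𝒜.card > Nat.factorial d * (k - 1) ^ d) :
    ∃ 𝒮 ⊆ 𝒜, 𝒮.card = k ∧
      ∃ Y : Finset α, ∀ S ∈ 𝒮, ∀ T ∈ 𝒮, S ≠ T → S ∩ T = Y := by
  rcases Nat.lt_or_ge k 2 with h | h
  · have hk1 : k = 1 := by omega
    subst hk1
    have : 𝒜.Nonempty := Finset.card_pos.mp (by omega)
    obtain ⟨S, hS⟩ := this
    refine ⟨{S}, Finset.singleton_subset_iff.mpr hS, Finset.card_singleton S, ∅, ?_⟩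
    intro A hA B hB hne
    rw [Finset.mem_singleton] at hA hB
    exact absurd (hA.trans hB.symm) hne
  · exact sunflower_aux k h d 𝒜 hcard hbig
end

section
/- Let G be a graph, k a positive integer, and I_s, I_t independent sets of G with |I_s| = |I_t| = k. Suppose v_1, …, v_{2k} are distinct vertices of V(G) \ (I_s ∪ I_t) whose closed neighborhoods N_G[v_1], …, N_G[v_{2k}] form a sunflower with 2k petals (all petals nonempty). If there exists a reconfiguration sequence from I_s to I_t in G, then there exists a reconfiguration sequence from I_s to I_t in G that does not touch v_1. -/
/-- `s` is an independent set of `G`. -/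
def IsIndep {V : Type*} (G : SimpleGraph V) (s : Finset V) : Prop :=
  ∀ u ∈ s, ∀ w ∈ s, ¬ G.Adj u w

/-- The closed neighborhood `N_G[v]` of `v` in `G`, as a finite set. -/
def closedNbhd {V : Type*} [Fintype V] [DecidableEq V] (G : SimpleGraph V)
    [DecidableRel G.Adj] (v : V) : Finset V :=
  insert v (G.neighborFinset v)

/-- A reconfiguration sequence of independent sets (between `Is` and `It`, with
sizes in `{k-1, k}`, consecutive sets differing in exactly one vertex) inside the
induced subgraph `G[W]`, of length `ℓ`, given by `σ 0, σ 1, …, σ ℓ`. -/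
def IsISRecSeqOn {V : Type*} [DecidableEq V] (G : SimpleGraph V) (W : Finset V)
    (k : ℕ) (Is It : Finset V) (ℓ : ℕ) (σ : ℕ → Finset V) : Prop :=
  σ 0 = Is ∧ σ ℓ = It ∧
  (∀ i ≤ ℓ, σ i ⊆ W ∧ IsIndep G (σ i) ∧ k - 1 ≤ (σ i).card ∧ (σ i).card ≤ k) ∧
  (∀ i < ℓ, (symmDiff (σ i) (σ (i + 1))).card = 1)

/- ---------------- Auxiliary lemmas ---------------- -/

lemma mem_closedNbhd {V : Type*} [Fintype V] [DecidableEq V] (G : SimpleGraph V)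
    [DecidableRel G.Adj] {x a : V} : a ∈ closedNbhd G x ↔ a = x ∨ G.Adj x a := by
  simp [closedNbhd]

lemma mem_closedNbhd_self {V : Type*} [Fintype V] [DecidableEq V] (G : SimpleGraph V)
    [DecidableRel G.Adj] (x : V) : x ∈ closedNbhd G x :=
  Finset.mem_insert_self x _

lemma isIndep_subset {V : Type*} (G : SimpleGraph V) {s t : Finset V} (h : s ⊆ t)
    (ht : IsIndep G t) : IsIndep G s :=
  fun u hu w hw => ht u (h hu) w (h hw)

/-- Structure of a single reconfiguration step. -/
lemma symmDiff_card_one {V : Type*} [DecidableEq V] {s t : Finset V}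
    (h : (symmDiff s t).card = 1) :
    (∃ x ∈ s, t = s.erase x) ∨ (∃ x, x ∉ s ∧ t = insert x s) := by
  obtain ⟨x, hx⟩ := Finset.card_eq_one.mp h
  have hx' : x ∈ symmDiff s t := by rw [hx]; exact Finset.mem_singleton_self x
  rw [Finset.mem_symmDiff] at hx'
  have hmemiff : ∀ y, y ∈ symmDiff s t ↔ y = x := by
    intro y; rw [hx, Finset.mem_singleton]
  rcases hx' with ⟨hxs, hxt⟩ | ⟨hxt, hxs⟩
  · left
    refine ⟨x, hxs, ?_⟩
    ext y
    simp only [Finset.mem_erase]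
    constructor
    · intro hy
      refine ⟨fun he => hxt (he ▸ hy), ?_⟩
      by_contra hys
      have hyd : y ∈ symmDiff s t := Finset.mem_symmDiff.mpr (Or.inr ⟨hy, hys⟩)
      exact hxt (by rwa [(hmemiff y).mp hyd] at hy)
    · rintro ⟨hyx, hys⟩
      by_contra hyt
      exact hyx ((hmemiff y).mp (Finset.mem_symmDiff.mpr (Or.inl ⟨hys, hyt⟩)))
  · right
    refine ⟨x, hxs, ?_⟩
    ext y
    simp only [Finset.mem_insert]
    constructor
    · intro hy
      by_cases hyx : y = x
      · exact Or.inl hyx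
      · right; by_contra hys
        exact hyx ((hmemiff y).mp (Finset.mem_symmDiff.mpr (Or.inr ⟨hy, hys⟩)))
    · rintro (rfl | hys)
      · exact hxt
      · by_contra hyt
        have := (hmemiff y).mp (Finset.mem_symmDiff.mpr (Or.inl ⟨hys, hyt⟩))
        exact hxs (this ▸ hys)

lemma symmDiff_insert_self' {V : Type*} [DecidableEq V] {s : Finset V} {x : V} (hx : x ∉ s) :
    symmDiff s (insert x s) = {x} := by
  ext a
  rw [Finset.mem_symmDiff]
  simp only [Finset.mem_insert, Finset.mem_singleton]
  constructor
  · rintro (⟨h1, h2⟩ | ⟨h1, h2⟩)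
    · exact absurd (Or.inr h1) h2
    · rcases h1 with rfl | h1
      · rfl
      · exact absurd h1 h2
  · rintro rfl
    exact Or.inr ⟨Or.inl rfl, hx⟩

lemma symmDiff_erase_self' {V : Type*} [DecidableEq V] {s : Finset V} {x : V} (hx : x ∈ s) :
    symmDiff s (s.erase x) = {x} := by
  ext a
  rw [Finset.mem_symmDiff]
  simp only [Finset.mem_erase, Finset.mem_singleton]
  constructor
  · rintro (⟨h1, h2⟩ | ⟨⟨h1, h2⟩, h3⟩)
    · by_contra hne
      exact h2 ⟨hne, h1⟩
    · exact absurd h2 h3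
  · rintro rfl
    exact Or.inl ⟨hx, fun h => h.1 rfl⟩

/-- Among the `2k` petals, one avoiding a small set `A` (and different from
index `z`) can always be found. -/
lemma exists_free_petal {V : Type*} [Fintype V] [DecidableEq V] (G : SimpleGraph V)
    [DecidableRel G.Adj] {k : ℕ} (hk : 0 < k) (v : Fin (2*k) → V) (Y : Finset V)
    (hsun : ∀ i j, i ≠ j → closedNbhd G (v i) ∩ closedNbhd G (v j) = Y)
    (z : Fin (2*k)) (A : Finset V) (hA : A.card ≤ 2*k - 2) :
    ∃ j, j ≠ z ∧ ∀ a ∈ A, a ∉ closedNbhd G (v j) \ Y := by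
  classical
  by_contra hcon
  push_neg at hcon
  have hg : ∀ j : Fin (2*k), ∃ a, j ≠ z → a ∈ A ∧ a ∈ closedNbhd G (v j) \ Y := by
    intro j
    by_cases h : j = z
    · exact ⟨v z, fun hc => absurd h hc⟩
    · obtain ⟨a, ha, ha2⟩ := hcon j h
      exact ⟨a, fun _ => ⟨ha, ha2⟩⟩
  choose g hgspec using hg
  have hf : ∀ j ∈ (Finset.univ : Finset (Fin (2*k))).erase z, g j ∈ A :=
    fun j hj => (hgspec j (Finset.ne_of_mem_erase hj)).1
  have hinj' : Set.InjOn g ((Finset.univ : Finset (Fin (2*k))).erase z) := by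
    intro j1 hj1 j2 hj2 he
    by_contra hne
    have h1 := (hgspec j1 (Finset.ne_of_mem_erase hj1)).2
    have h2 := (hgspec j2 (Finset.ne_of_mem_erase hj2)).2
    rw [Finset.mem_sdiff] at h1 h2
    have hYmem : g j1 ∈ Y := by
      rw [← hsun j1 j2 hne]
      refine Finset.mem_inter.mpr ⟨h1.1, ?_⟩
      rw [he]; exact h2.1
    exact h1.2 hYmem
  have hcard := Finset.card_le_card_of_injOn g hf hinj'
  have hC : ((Finset.univ : Finset (Fin (2*k))).erase z).card = 2*k - 1 := by
    rw [Finset.card_erase_of_mem (Finset.mem_univ z), Finset.card_univ, Fintype.card_fin]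
  omega

/-- Key fact: if the petal of `v j` avoids `S \ {x0}` and `x0 ∈ S` (with `S`
independent), then the whole closed neighborhood of `v j` avoids `S \ {x0}`. -/
lemma key_nbhd {V : Type*} [Fintype V] [DecidableEq V] (G : SimpleGraph V)
    [DecidableRel G.Adj] {x0 xj : V} {Y S : Finset V}
    (hY : closedNbhd G xj ∩ closedNbhd G x0 = Y) (hS : IsIndep G S) (h0 : x0 ∈ S)
    (hfree : ∀ a ∈ S, a ≠ x0 → a ∉ closedNbhd G xj \ Y) :
    ∀ a ∈ S, a ≠ x0 → a ∉ closedNbhd G xj := by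
  intro a ha hne hmem
  by_cases hy : a ∈ Y
  · have hax0 : a ∈ closedNbhd G x0 := by
      rw [← hY] at hy
      exact (Finset.mem_inter.mp hy).2
    rcases (mem_closedNbhd G).mp hax0 with h | h
    · exact hne h
    · exact hS x0 h0 a ha h
  · exact hfree a ha hne (Finset.mem_sdiff.mpr ⟨hmem, hy⟩)

lemma swap_not_mem {V : Type*} [Fintype V] [DecidableEq V] (G : SimpleGraph V)
    [DecidableRel G.Adj] {x0 xj : V} {S : Finset V}
    (hkey : ∀ a ∈ S, a ≠ x0 → a ∉ closedNbhd G xj) : xj ∉ S.erase x0 :=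
  fun h => hkey xj (Finset.mem_of_mem_erase h) (Finset.ne_of_mem_erase h)
    (mem_closedNbhd_self G xj)

lemma swap_indep {V : Type*} [Fintype V] [DecidableEq V] (G : SimpleGraph V)
    [DecidableRel G.Adj] {x0 xj : V} {S : Finset V} (hS : IsIndep G S)
    (hkey : ∀ a ∈ S, a ≠ x0 → a ∉ closedNbhd G xj) :
    IsIndep G (insert xj (S.erase x0)) := by
  intro u hu w hw
  rcases Finset.mem_insert.mp hu with rfl | hu' <;> rcases Finset.mem_insert.mp hw with h | hw'
  · subst h
    exact fun hadj => G.loopless.irrefl _ hadj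
  · intro hadj
    exact hkey w (Finset.mem_of_mem_erase hw') (Finset.ne_of_mem_erase hw')
      ((mem_closedNbhd G).mpr (Or.inr hadj))
  · subst h
    intro hadj
    exact hkey u (Finset.mem_of_mem_erase hu') (Finset.ne_of_mem_erase hu')
      ((mem_closedNbhd G).mpr (Or.inr hadj.symm))
  · exact hS u (Finset.mem_of_mem_erase hu') w (Finset.mem_of_mem_erase hw')

/-- There is a reconfiguration sequence from `S` to `It` avoiding `x0`. -/
def GoodFrom {V : Type*} [Fintype V] [DecidableEq V] (G : SimpleGraph V) (k : ℕ)
    (It : Finset V) (x0 : V) (S : Finset V) : Prop :=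
  ∃ ℓ σ, IsISRecSeqOn G Finset.univ k S It ℓ σ ∧
    ∀ i < ℓ, x0 ∉ symmDiff (σ i) (σ (i + 1))

/-- Prepend one step to a good sequence. -/
lemma good_cons {V : Type*} [Fintype V] [DecidableEq V] {G : SimpleGraph V} {k : ℕ}
    {It : Finset V} {x0 : V} {S' A : Finset V}
    (h : GoodFrom G k It x0 S') (hA1 : IsIndep G A) (hA2 : k - 1 ≤ A.card) (hA3 : A.card ≤ k)
    (hd : (symmDiff A S').card = 1) (hx0A : x0 ∉ A) (hx0S : x0 ∉ S') :
    GoodFrom G k It x0 A := by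
  obtain ⟨ℓ, τ, ⟨hτ0, hτl, hτmem, hτstep⟩, hτav⟩ := h
  refine ⟨ℓ + 1, fun i => match i with | 0 => A | m + 1 => τ m, ⟨rfl, hτl, ?_, ?_⟩, ?_⟩
  · intro i hi
    rcases i with _ | m
    · exact ⟨Finset.subset_univ _, hA1, hA2, hA3⟩
    · exact hτmem m (by omega)
  · intro i hi
    rcases i with _ | m
    · show (symmDiff A (τ 0)).card = 1
      rw [hτ0]; exact hd
    · exact hτstep m (by omega)
  · intro i hi
    rcases i with _ | m
    · show x0 ∉ symmDiff A (τ 0)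
      rw [hτ0]
      intro hx
      rcases Finset.mem_symmDiff.mp hx with ⟨h1, _⟩ | ⟨h1, _⟩
      · exact hx0A h1
      · exact hx0S h1
    · exact hτav m (by omega)

/-- The main induction: from any reconfiguration sequence one starting at `S`
(or at `S` with `v z` swapped for a free petal vertex `v j`) avoiding `v z`
can be constructed. -/
lemma main_ind {V : Type*} [Fintype V] [DecidableEq V] (G : SimpleGraph V)
    [DecidableRel G.Adj] (k : ℕ) (hk : 0 < k) (It : Finset V) (hItCard : It.card = k)
    (v : Fin (2*k) → V) (hinj : Function.Injective v) (houtIt : ∀ j, v j ∉ It)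
    (Y : Finset V)
    (hsun : ∀ i j, i ≠ j → closedNbhd G (v i) ∩ closedNbhd G (v j) = Y)
    (z : Fin (2*k)) :
    ∀ ℓ : ℕ, ∀ S : Finset V, ∀ σ : ℕ → Finset V,
      IsISRecSeqOn G Finset.univ k S It ℓ σ → S.card = k →
      ((v z ∉ S → GoodFrom G k It (v z) S) ∧
       (v z ∈ S → ∀ j, j ≠ z → (∀ a ∈ S, a ≠ v z → a ∉ closedNbhd G (v j) \ Y) →
         GoodFrom G k It (v z) (insert (v j) (S.erase (v z))))) := by
  intro ℓ
  induction ℓ using Nat.strong_induction_on with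
  | _ ℓ ih =>
  intro S σ hσ hScard
  obtain ⟨hσ0, hσl, hmem, hstep⟩ := hσ
  rcases ℓ with _ | ℓ'
  · -- length 0
    have hSIt : S = It := by rw [← hσ0, hσl]
    constructor
    · intro _
      refine ⟨0, fun _ => S, ⟨rfl, hSIt, ?_, ?_⟩, ?_⟩
      · intro i _
        refine ⟨Finset.subset_univ _, ?_, show k - 1 ≤ S.card by omega,
          show S.card ≤ k by omega⟩
        rw [← hσ0]
        exact (hmem 0 le_rfl).2.1
      · intro i hi; exact absurd hi (Nat.not_lt_zero i)
      · intro i hi; exact absurd hi (Nat.not_lt_zero i)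
    · intro h0 j _ _
      exact absurd (hSIt ▸ h0) (houtIt z)
  rcases ℓ' with _ | n
  · -- length 1 : impossible (parities differ)
    exfalso
    have hs0 : (σ 0).card = k := by rw [hσ0]; exact hScard
    rcases symmDiff_card_one (hstep 0 (by omega)) with ⟨x, hx, ht⟩ | ⟨x, hx, ht⟩
    · have h1 : (σ 1).card = k - 1 := by
        rw [ht, Finset.card_erase_of_mem hx, hs0]
      have h2 : It.card = k - 1 := by rw [← hσl]; exact h1
      omega
    · have h1 : (σ 1).card = k + 1 := by
        rw [ht, Finset.card_insert_of_notMem hx, hs0]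
      have hb := (hmem 1 (by omega)).2.2.2
      omega
  · -- length n + 2
    have hs0 : (σ 0).card = k := by rw [hσ0]; exact hScard
    have hind0 : IsIndep G (σ 0) := (hmem 0 (by omega)).2.1
    have hind1 : IsIndep G (σ 1) := (hmem 1 (by omega)).2.1
    have hind2 : IsIndep G (σ 2) := (hmem 2 (by omega)).2.1
    obtain ⟨w, hw, h1⟩ : ∃ w ∈ σ 0, σ 1 = (σ 0).erase w := by
      rcases symmDiff_card_one (hstep 0 (by omega)) with ⟨x, hx, ht⟩ | ⟨x, hx, ht⟩
      · exact ⟨x, hx, ht⟩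
      · exfalso
        have hc1 : (σ 1).card = k + 1 := by
          rw [ht, Finset.card_insert_of_notMem hx, hs0]
        have hb := (hmem 1 (by omega)).2.2.2
        omega
    have hs1 : (σ 1).card = k - 1 := by
      rw [h1, Finset.card_erase_of_mem hw, hs0]
    obtain ⟨u, hu, h2⟩ : ∃ u, u ∉ σ 1 ∧ σ 2 = insert u (σ 1) := by
      rcases symmDiff_card_one (hstep 1 (by omega)) with ⟨x, hx, ht⟩ | ⟨x, hx, ht⟩
      · exfalso
        have hpos : 0 < (σ 1).card := Finset.card_pos.mpr ⟨x, hx⟩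
        have hc2 : (σ 2).card = (σ 1).card - 1 := by
          rw [ht, Finset.card_erase_of_mem hx]
        have hb := (hmem 2 (by omega)).2.2.1
        omega
      · exact ⟨x, hx, ht⟩
    have hs2 : (σ 2).card = k := by
      have hc2 : (σ 2).card = (σ 1).card + 1 := by
        rw [h2, Finset.card_insert_of_notMem hu]
      omega
    have htail : IsISRecSeqOn G Finset.univ k (σ 2) It n (fun i => σ (i+2)) := by
      refine ⟨rfl, hσl, ?_, ?_⟩
      · intro i hi; exact hmem (i+2) (by omega)
      · intro i hi; exact hstep (i+2) (by omega)
    have IH := ih n (by omega) (σ 2) (fun i => σ (i+2)) htail hs2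
    constructor
    · -- part (a) : v z ∉ S
      intro hv0S
      have hv00 : v z ∉ σ 0 := by rw [hσ0]; exact hv0S
      have hv01 : v z ∉ σ 1 := by
        rw [h1]; exact fun h => hv00 (Finset.mem_of_mem_erase h)
      by_cases hc : v z ∈ σ 2
      · -- the second half-step added v z ; use a surrogate petal vertex instead
        have hc' := hc
        rw [h2] at hc'
        have huz : u = v z := by
          rcases Finset.mem_insert.mp hc' with h | h
          · exact h.symm
          · exact absurd h hv01
        have herase : (σ 2).erase (v z) = σ 1 := by
          rw [h2, huz, Finset.erase_insert hv01]
        obtain ⟨j, hjz, hjfree⟩ := exists_free_petal G hk v Y hsun z (σ 1) (by omega)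
        have hfree2 : ∀ a ∈ σ 2, a ≠ v z → a ∉ closedNbhd G (v j) \ Y := by
          intro a ha hne
          rw [h2] at ha
          rcases Finset.mem_insert.mp ha with h | h
          · exact absurd (h.trans huz) hne
          · exact hjfree a h
        have T := IH.2 hc j hjz hfree2
        rw [herase] at T
        have hkeyj := key_nbhd G (hsun j z hjz) hind2 hc hfree2
        have hvjz : v j ≠ v z := fun he => hjz (hinj he)
        have hvj1 : v j ∉ σ 1 := by
          intro hm
          exact hkeyj (v j) (by rw [h2, huz]; exact Finset.mem_insert_of_mem hm)
            hvjz (mem_closedNbhd_self G _)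
        have hv0ins : v z ∉ insert (v j) (σ 1) := by
          intro h
          rcases Finset.mem_insert.mp h with h | h
          · exact hvjz h.symm
          · exact hv01 h
        have T1 : GoodFrom G k It (v z) (σ 1) :=
          good_cons T hind1 (by omega) (by omega)
            (by rw [symmDiff_insert_self' hvj1]; exact Finset.card_singleton _)
            hv01 hv0ins
        have T0 : GoodFrom G k It (v z) (σ 0) :=
          good_cons T1 hind0 (by omega) (by omega) (hstep 0 (by omega)) hv00 hv01
        rw [← hσ0]
        exact T0
      · have T := IH.1 hc
        have T1 : GoodFrom G k It (v z) (σ 1) :=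
          good_cons T hind1 (by omega) (by omega) (hstep 1 (by omega)) hv01 hc
        have T0 : GoodFrom G k It (v z) (σ 0) :=
          good_cons T1 hind0 (by omega) (by omega) (hstep 0 (by omega)) hv00 hv01
        rw [← hσ0]
        exact T0
    · -- part (b) : v z ∈ S, surrogate j given
      intro hv0S j hjz hjfree
      have hv00 : v z ∈ σ 0 := by rw [hσ0]; exact hv0S
      have hjfree0 : ∀ a ∈ σ 0, a ≠ v z → a ∉ closedNbhd G (v j) \ Y := by
        rw [hσ0]; exact hjfree
      have hkeyj := key_nbhd G (hsun j z hjz) hind0 hv00 hjfree0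
      have hvjz : v j ≠ v z := fun he => hjz (hinj he)
      have hvjA1 : v j ∉ (σ 0).erase (v z) := swap_not_mem G hkeyj
      have hτ0ind : IsIndep G (insert (v j) ((σ 0).erase (v z))) :=
        swap_indep G hind0 hkeyj
      have hA1card : ((σ 0).erase (v z)).card = k - 1 := by
        rw [Finset.card_erase_of_mem hv00, hs0]
      have hτ0card : (insert (v j) ((σ 0).erase (v z))).card = k := by
        rw [Finset.card_insert_of_notMem hvjA1, hA1card]; omega
      have hv0A1 : v z ∉ (σ 0).erase (v z) := Finset.notMem_erase _ _
      have hv0τ0 : v z ∉ insert (v j) ((σ 0).erase (v z)) := by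
        intro h
        rcases Finset.mem_insert.mp h with h | h
        · exact hvjz h.symm
        · exact hv0A1 h
      by_cases hw0 : w = v z
      · -- the first half-step removed v z
        subst hw0
        by_cases hu0 : u = v z
        · -- and the second half-step put it back : skip the round entirely
          have hσ2 : σ 2 = σ 0 := by rw [h2, hu0, h1, Finset.insert_erase hv00]
          have hfree2 : ∀ a ∈ σ 2, a ≠ v z → a ∉ closedNbhd G (v j) \ Y := by
            rw [hσ2]; exact hjfree0
          have T := IH.2 (by rw [hσ2]; exact hv00) j hjz hfree2
          rw [hσ2] at T
          rw [← hσ0]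
          exact T
        · have hv01 : v z ∉ σ 1 := by rw [h1]; exact Finset.notMem_erase _ _
          have hv02 : v z ∉ σ 2 := by
            rw [h2]
            intro h
            rcases Finset.mem_insert.mp h with h | h
            · exact hu0 h.symm
            · exact hv01 h
          have T := IH.1 hv02
          have T1 : GoodFrom G k It (v z) (σ 1) :=
            good_cons T hind1 (by omega) (by omega) (hstep 1 (by omega)) hv01 hv02
          have T0 : GoodFrom G k It (v z) (insert (v j) ((σ 0).erase (v z))) :=
            good_cons T1 hτ0ind (by omega) (by omega)
              (by rw [h1, symmDiff_comm, symmDiff_insert_self' hvjA1]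
                  exact Finset.card_singleton _)
              hv0τ0 hv01
          rw [← hσ0]
          exact T0
      · -- v z stays put during this round
        have hv01 : v z ∈ σ 1 := by
          rw [h1]; exact Finset.mem_erase.mpr ⟨fun h => hw0 h.symm, hv00⟩
        have hu_ne : u ≠ v z := fun h => hu (h ▸ hv01)
        have hv02 : v z ∈ σ 2 := by rw [h2]; exact Finset.mem_insert_of_mem hv01
        by_cases huw : u = w
        · -- trivial round : skip it
          have hσ2 : σ 2 = σ 0 := by rw [h2, huw, h1, Finset.insert_erase hw]
          have hfree2 : ∀ a ∈ σ 2, a ≠ v z → a ∉ closedNbhd G (v j) \ Y := by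
            rw [hσ2]; exact hjfree0
          have T := IH.2 (by rw [hσ2]; exact hv00) j hjz hfree2
          rw [hσ2] at T
          rw [← hσ0]
          exact T
        · -- the essential case : re-choose the surrogate petal
          have hk2 : 2 ≤ k := by
            have h2le : 1 < (σ 0).card :=
              Finset.one_lt_card.mpr ⟨w, hw, v z, hv00, hw0⟩
            omega
          have hu0 : u ∉ σ 0 := by
            intro h
            exact hu (by rw [h1]; exact Finset.mem_erase.mpr ⟨huw, h⟩)
          have huA1 : u ∉ (σ 0).erase (v z) := fun h => hu0 (Finset.mem_of_mem_erase h)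
          have hBcard : (insert u ((σ 0).erase (v z))).card = k := by
            rw [Finset.card_insert_of_notMem huA1, hA1card]; omega
          obtain ⟨j', hj'z, hj'free⟩ :=
            exists_free_petal G hk v Y hsun z (insert u ((σ 0).erase (v z))) (by omega)
          have hfree0j' : ∀ a ∈ σ 0, a ≠ v z → a ∉ closedNbhd G (v j') \ Y := by
            intro a ha hne
            exact hj'free a (Finset.mem_insert_of_mem (Finset.mem_erase.mpr ⟨hne, ha⟩))
          have hfree2j' : ∀ a ∈ σ 2, a ≠ v z → a ∉ closedNbhd G (v j') \ Y := by
            intro a ha hne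
            rw [h2] at ha
            rcases Finset.mem_insert.mp ha with rfl | hmem'
            · exact hj'free a (Finset.mem_insert_self _ _)
            · have haσ0 : a ∈ σ 0 := by
                rw [h1] at hmem'; exact Finset.mem_of_mem_erase hmem'
              exact hfree0j' a haσ0 hne
          have T := IH.2 hv02 j' hj'z hfree2j'
          have hkey0j' := key_nbhd G (hsun j' z hj'z) hind0 hv00 hfree0j'
          have hkey2j' := key_nbhd G (hsun j' z hj'z) hind2 hv02 hfree2j'
          have hvj'z : v j' ≠ v z := fun he => hj'z (hinj he)
          have hvj'A1 : v j' ∉ (σ 0).erase (v z) := swap_not_mem G hkey0j'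
          have hA2ind : IsIndep G (insert (v j') ((σ 0).erase (v z))) :=
            swap_indep G hind0 hkey0j'
          have hA2card : (insert (v j') ((σ 0).erase (v z))).card = k := by
            rw [Finset.card_insert_of_notMem hvj'A1, hA1card]; omega
          have huvj' : u ≠ v j' := by
            intro h
            exact hkey2j' u (by rw [h2]; exact Finset.mem_insert_self _ _) hu_ne
              (by rw [h]; exact mem_closedNbhd_self G _)
          have hvj'w : v j' ≠ w := by
            intro h
            exact hkey0j' w hw hw0 (by rw [← h]; exact mem_closedNbhd_self G _)
          have hwA2 : w ∈ insert (v j') ((σ 0).erase (v z)) :=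
            Finset.mem_insert_of_mem (Finset.mem_erase.mpr ⟨hw0, hw⟩)
          have hA3card : ((insert (v j') ((σ 0).erase (v z))).erase w).card = k - 1 := by
            rw [Finset.card_erase_of_mem hwA2, hA2card]
          have hA3ind : IsIndep G ((insert (v j') ((σ 0).erase (v z))).erase w) :=
            isIndep_subset G (Finset.erase_subset _ _) hA2ind
          have huA3 : u ∉ (insert (v j') ((σ 0).erase (v z))).erase w := by
            intro h
            rcases Finset.mem_insert.mp (Finset.mem_of_mem_erase h) with h' | h'
            · exact huvj' h'
            · exact huA1 h'
          have hv0A2 : v z ∉ insert (v j') ((σ 0).erase (v z)) := by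
            intro h
            rcases Finset.mem_insert.mp h with h | h
            · exact hvj'z h.symm
            · exact hv0A1 h
          have hv0A3 : v z ∉ (insert (v j') ((σ 0).erase (v z))).erase w :=
            fun h => hv0A2 (Finset.mem_of_mem_erase h)
          have hv0τ2 : v z ∉ insert (v j') ((σ 2).erase (v z)) := by
            intro h
            rcases Finset.mem_insert.mp h with h | h
            · exact hvj'z h.symm
            · exact Finset.notMem_erase _ _ h
          have hA4 : insert u ((insert (v j') ((σ 0).erase (v z))).erase w)
              = insert (v j') ((σ 2).erase (v z)) := by
            ext a
            simp only [h2, h1, Finset.mem_insert, Finset.mem_erase]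
            constructor
            · rintro (rfl | ⟨hnw, (rfl | ⟨hnz, ha⟩)⟩)
              · exact Or.inr ⟨hu_ne, Or.inl rfl⟩
              · exact Or.inl rfl
              · exact Or.inr ⟨hnz, Or.inr ⟨hnw, ha⟩⟩
            · rintro (rfl | ⟨hnz, (rfl | ⟨hnw, ha⟩)⟩)
              · exact Or.inr ⟨hvj'w, Or.inl rfl⟩
              · exact Or.inl rfl
              · exact Or.inr ⟨hnw, Or.inr ⟨hnz, ha⟩⟩
          have T3 : GoodFrom G k It (v z) ((insert (v j') ((σ 0).erase (v z))).erase w) :=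
            good_cons T hA3ind (by omega) (by omega)
              (by rw [← hA4, symmDiff_insert_self' huA3]
                  exact Finset.card_singleton _)
              hv0A3 hv0τ2
          have T2 : GoodFrom G k It (v z) (insert (v j') ((σ 0).erase (v z))) :=
            good_cons T3 hA2ind (by omega) (by omega)
              (by rw [symmDiff_erase_self' hwA2]; exact Finset.card_singleton _)
              hv0A2 hv0A3
          have TA1 : GoodFrom G k It (v z) ((σ 0).erase (v z)) :=
            good_cons T2 (isIndep_subset G (Finset.erase_subset _ _) hind0)
              (by omega) (by omega)
              (by rw [symmDiff_insert_self' hvj'A1]; exact Finset.card_singleton _)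
              hv0A1 hv0A2
          have Tτ0 : GoodFrom G k It (v z) (insert (v j) ((σ 0).erase (v z))) :=
            good_cons TA1 hτ0ind (by omega) (by omega)
              (by rw [symmDiff_comm, symmDiff_insert_self' hvjA1]
                  exact Finset.card_singleton _)
              hv0τ0 hv0A1
          rw [← hσ0]
          exact Tτ0

/-- If the closed neighborhoods of `2k` distinct vertices outside `I_s ∪ I_t`
form a sunflower with `2k` (nonempty) petals, and there is a reconfiguration
sequence from `I_s` to `I_t`, then there is one that never touches `v 0`. -/
theorem isr_sunflower_irrelevant {V : Type*} [Fintype V] [DecidableEq V]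
    (G : SimpleGraph V) [DecidableRel G.Adj] (k : ℕ) (hk : 0 < k)
    (Is It : Finset V) (hIs : IsIndep G Is) (hIt : IsIndep G It)
    (hIsCard : Is.card = k) (hItCard : It.card = k)
    (v : Fin (2 * k) → V) (hinj : Function.Injective v)
    (hout : ∀ j, v j ∉ Is ∪ It)
    (Y : Finset V)
    (hsun : ∀ i j, i ≠ j → closedNbhd G (v i) ∩ closedNbhd G (v j) = Y)
    (hpet : ∀ i, (closedNbhd G (v i) \ Y).Nonempty)
    (hreach : ∃ ℓ σ, IsISRecSeqOn G Finset.univ k Is It ℓ σ) :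
    ∃ ℓ σ, IsISRecSeqOn G Finset.univ k Is It ℓ σ ∧
      ∀ i < ℓ, v ⟨0, by omega⟩ ∉ symmDiff (σ i) (σ (i + 1)) := by
  obtain ⟨ℓ, σ, hseq⟩ := hreach
  have houtIt : ∀ j, v j ∉ It := fun j h => hout j (Finset.mem_union_right _ h)
  have hv0Is : v ⟨0, by omega⟩ ∉ Is := fun h => hout _ (Finset.mem_union_left _ h)
  exact (main_ind G k hk It hItCard v hinj houtIt Y hsun ⟨0, by omega⟩ ℓ Is σ hseq
    hIsCard).1 hv0Is
end

section
/- Let G be a d-degenerate graph, k a positive integer, I_s and I_t independent sets of G with |I_s| = |I_t| = k, and let B be the set of vertices in V(G) \ (I_s ∪ I_t) of degree at most 2d in G. If |B| > (2d + 1)!·(2k − 1)^{2d + 1}, then there exists a vertex v ∈ V(G) \ (I_s ∪ I_t) such that there is a reconfiguration sequence from I_s to I_t in G if and only if there is a reconfiguration sequence from I_s to I_t in the graph G − v obtained from G by deleting v and all edges incident on v. -/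
/-- A graph `G` is `d`-degenerate if every nonempty induced subgraph (given by a
nonempty finite set of vertices `S`) contains a vertex whose degree within `S`
is at most `d`. -/
def Degenerate {V : Type*} [Fintype V] [DecidableEq V] (G : SimpleGraph V)
    [DecidableRel G.Adj] (d : ℕ) : Prop :=
  ∀ S : Finset V, S.Nonempty → ∃ v ∈ S, (S.filter (fun u => G.Adj v u)).card ≤ d

section Helpers

variable {V : Type*} [DecidableEq V]

variable {V : Type*} [DecidableEq V]

lemma sd_insert (A : Finset V) (x : V) (hx : x ∉ A) : symmDiff A (insert x A) = {x} := by
  ext y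
  simp only [Finset.mem_symmDiff, Finset.mem_insert, Finset.mem_singleton]
  constructor
  · rintro (⟨h1, h2⟩ | ⟨h1, h2⟩)
    · exact absurd (Or.inr h1) h2
    · rcases h1 with h | h
      · exact h
      · exact absurd h h2
  · rintro rfl
    exact Or.inr ⟨Or.inl rfl, hx⟩

lemma sd_erase (A : Finset V) (x : V) (hx : x ∈ A) : symmDiff A (A.erase x) = {x} := by
  ext y
  simp only [Finset.mem_symmDiff, Finset.mem_erase, Finset.mem_singleton]
  constructor
  · rintro (⟨h1, h2⟩ | ⟨⟨h1, h2⟩, h3⟩)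
    · by_contra hne
      exact h2 ⟨hne, h1⟩
    · exact absurd h2 h3
  · rintro rfl
    exact Or.inl ⟨hx, fun h => h.1 rfl⟩

lemma card_sd_one {A B : Finset V} (h : (symmDiff A B).card = 1) :
    ∃ x, (x ∉ A ∧ B = insert x A) ∨ (x ∈ A ∧ B = A.erase x) := by
  rw [Finset.card_eq_one] at h
  obtain ⟨x, hx⟩ := h
  have hmem : ∀ y, (y ∈ A ∧ y ∉ B ∨ y ∈ B ∧ y ∉ A) ↔ y = x := by
    intro y
    rw [← Finset.mem_symmDiff, hx, Finset.mem_singleton]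
  by_cases hxA : x ∈ A
  · refine ⟨x, Or.inr ⟨hxA, ?_⟩⟩
    have hxB : x ∉ B := by
      rcases (hmem x).2 rfl with ⟨_, h2⟩ | ⟨_, h2⟩
      · exact h2
      · exact absurd hxA h2
    ext y
    simp only [Finset.mem_erase]
    constructor
    · intro hyB
      refine ⟨fun he => hxB (he ▸ hyB), ?_⟩
      by_contra hyA
      have := (hmem y).1 (Or.inr ⟨hyB, hyA⟩)
      exact hxB (this ▸ hyB)
    · rintro ⟨hne, hyA⟩
      by_contra hyB
      exact hne ((hmem y).1 (Or.inl ⟨hyA, hyB⟩))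
  · refine ⟨x, Or.inl ⟨hxA, ?_⟩⟩
    have hxB : x ∈ B := by
      rcases (hmem x).2 rfl with ⟨h1, _⟩ | ⟨h1, _⟩
      · exact absurd h1 hxA
      · exact h1
    ext y
    simp only [Finset.mem_insert]
    constructor
    · intro hyB
      by_cases hyA : y ∈ A
      · exact Or.inr hyA
      · exact Or.inl ((hmem y).1 (Or.inr ⟨hyB, hyA⟩))
    · rintro (rfl | hyA)
      · exact hxB
      · by_contra hyB
        have := (hmem y).1 (Or.inl ⟨hyA, hyB⟩)
        subst this
        exact hxA hyA


variable {α : Type*} [DecidableEq α]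

lemma sunflower_lemma_s4 (p : ℕ) (hp : 2 ≤ p) :
    ∀ (n : ℕ) (F : Finset (Finset α)), (∀ S ∈ F, S.card ≤ n) →
    F.card > n.factorial * (p - 1) ^ n →
    ∃ P ⊆ F, P.card = p ∧ ∃ C, ∀ A ∈ P, ∀ B ∈ P, A ≠ B → A ∩ B = C := by
  intro n
  induction n with
  | zero =>
    intro F hsz hcard
    exfalso
    have : F ⊆ {∅} := by
      intro S hS
      have := hsz S hS
      simp only [Nat.le_zero, Finset.card_eq_zero] at this
      simp [this]
    have h1 := Finset.card_le_card this
    simp only [Finset.card_singleton] at h1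
    have hb : Nat.factorial 0 * (p - 1) ^ 0 = 1 := by simp
    omega
  | succ n ih =>
    intro F hsz hcard
    -- maximal pairwise "disjoint" (empty pairwise inter) subfamily
    set cands := F.powerset.filter
      (fun D => ∀ A ∈ D, ∀ B ∈ D, A ≠ B → A ∩ B = ∅) with hcands
    have hne : cands.Nonempty := ⟨∅, by simp [hcands]⟩
    obtain ⟨D, hDmem, hDmax⟩ := Finset.exists_max_image cands Finset.card hne
    rw [hcands, Finset.mem_filter, Finset.mem_powerset] at hDmem
    obtain ⟨hDF, hDpd⟩ := hDmem
    by_cases hDp : p ≤ D.card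
    · obtain ⟨P, hPD, hPcard⟩ := Finset.exists_subset_card_eq hDp
      exact ⟨P, hPD.trans hDF, hPcard, ∅,
        fun A hA B hB hne' => hDpd A (hPD hA) B (hPD hB) hne'⟩
    · push_neg at hDp
      have hmaximal : ∀ S ∈ F, S ∉ D → ∃ E ∈ D, (S ∩ E).Nonempty := by
        intro S hSF hSD
        by_contra hno
        push_neg at hno
        have hins : insert S D ∈ cands := by
          rw [hcands, Finset.mem_filter, Finset.mem_powerset]
          refine ⟨Finset.insert_subset hSF hDF, ?_⟩
          intro A hA B hB hAB
          rcases Finset.mem_insert.1 hA with rfl | hA'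
          · rcases Finset.mem_insert.1 hB with rfl | hB'
            · exact absurd rfl hAB
            · have := hno B hB'
              exact this
          · rcases Finset.mem_insert.1 hB with rfl | hB'
            · have := hno A hA'
              rwa [Finset.inter_comm]
            · exact hDpd A hA' B hB' hAB
        have := hDmax _ hins
        rw [Finset.card_insert_of_notMem hSD] at this
        omega
      set Y := D.biUnion id with hY
      have hmeet : ∀ S ∈ F, S.Nonempty → (S ∩ Y).Nonempty := by
        intro S hSF hSne
        by_cases hSD : S ∈ D
        · obtain ⟨x, hx⟩ := hSne
          exact ⟨x, Finset.mem_inter.2 ⟨hx, Finset.mem_biUnion.2 ⟨S, hSD, hx⟩⟩⟩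
        · obtain ⟨E, hED, x, hx⟩ := hmaximal S hSF hSD
          rw [Finset.mem_inter] at hx
          exact ⟨x, Finset.mem_inter.2 ⟨hx.1,
            Finset.mem_biUnion.2 ⟨E, hED, hx.2⟩⟩⟩
      -- double counting
      have hdouble : (F.filter (fun S => S.Nonempty)).card ≤
          ∑ y ∈ Y, (F.filter (fun S => y ∈ S)).card := by
        have e1 : ∀ S : Finset α, (S ∩ Y).card = ∑ y ∈ Y, if y ∈ S then 1 else 0 := by
          intro S
          rw [← Finset.card_filter]
          congr 1
          rw [Finset.filter_mem_eq_inter, Finset.inter_comm]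
        have e2 : ∑ S ∈ F, (S ∩ Y).card = ∑ y ∈ Y, (F.filter (fun S => y ∈ S)).card := by
          simp_rw [e1, Finset.card_filter]
          exact Finset.sum_comm
        rw [← e2]
        calc (F.filter (fun S => S.Nonempty)).card
            = ∑ S ∈ F.filter (fun S => S.Nonempty), 1 := by rw [Finset.card_eq_sum_ones]
          _ ≤ ∑ S ∈ F.filter (fun S => S.Nonempty), (S ∩ Y).card := by
              apply Finset.sum_le_sum
              intro S hS
              rw [Finset.mem_filter] at hS
              exact Nat.one_le_iff_ne_zero.2 (fun h0 => by
                have := hmeet S hS.1 hS.2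
                rw [← Finset.card_pos, h0] at this
                omega)
          _ ≤ ∑ S ∈ F, (S ∩ Y).card :=
              Finset.sum_le_sum_of_subset (Finset.filter_subset _ _)
      -- find a high-degree element
      have hbig : ∃ y ∈ Y, (F.filter (fun S => y ∈ S)).card >
          n.factorial * (p - 1) ^ n := by
        by_contra hno
        push_neg at hno
        set Bn := n.factorial * (p - 1) ^ n with hBn
        have hBnpos : 1 ≤ Bn := by
          apply Nat.one_le_iff_ne_zero.2
          apply Nat.mul_ne_zero (Nat.factorial_ne_zero n)
          exact pow_ne_zero n (by omega)
        have hsum_le : ∑ y ∈ Y, (F.filter (fun S => y ∈ S)).card ≤ Y.card * Bn := by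
          calc _ ≤ ∑ _y ∈ Y, Bn := Finset.sum_le_sum (fun y hy => hno y hy)
            _ = Y.card * Bn := by rw [Finset.sum_const, smul_eq_mul]
        have hN1 : F.card > (n + 1).factorial * (p - 1) ^ (n + 1) := hcard
        have hfact : (n + 1).factorial * (p - 1) ^ (n + 1) = (n + 1) * (p - 1) * Bn := by
          rw [hBn, Nat.factorial_succ, pow_succ]
          ring
        by_cases hemp : ∅ ∈ F
        · have hempD : ∅ ∈ D := by
            by_contra hempD
            obtain ⟨E, _, hEne⟩ := hmaximal ∅ hemp hempD
            simp at hEne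
          have hYsub : Y ⊆ (D.erase ∅).biUnion id := by
            intro x hx
            obtain ⟨E, hED, hxE⟩ := Finset.mem_biUnion.1 hx
            refine Finset.mem_biUnion.2 ⟨E, Finset.mem_erase.2 ⟨?_, hED⟩, hxE⟩
            rintro rfl
            exact absurd hxE (Finset.notMem_empty x)
          have hYcard : Y.card ≤ (D.card - 1) * (n + 1) := by
            calc Y.card ≤ ((D.erase ∅).biUnion id).card := Finset.card_le_card hYsub
              _ ≤ ∑ E ∈ D.erase ∅, (id E).card := Finset.card_biUnion_le
              _ ≤ (D.erase ∅).card * (n + 1) := by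
                  apply Finset.sum_le_card_nsmul
                  intro E hE
                  exact hsz E (hDF (Finset.mem_of_mem_erase hE))
              _ = (D.card - 1) * (n + 1) := by
                  rw [Finset.card_erase_of_mem hempD]
          have hnonemptycard : (F.filter (fun S => S.Nonempty)).card = F.card - 1 := by
            have : F.filter (fun S => S.Nonempty) = F.erase ∅ := by
              ext S
              simp [Finset.mem_filter, Finset.mem_erase, Finset.nonempty_iff_ne_empty,
                and_comm]
            rw [this, Finset.card_erase_of_mem hemp]
          have h1 : F.card - 1 ≤ (D.card - 1) * (n + 1) * Bn := by
            rw [← hnonemptycard]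
            calc (F.filter (fun S => S.Nonempty)).card
                ≤ ∑ y ∈ Y, (F.filter (fun S => y ∈ S)).card := hdouble
              _ ≤ Y.card * Bn := hsum_le
              _ ≤ (D.card - 1) * (n + 1) * Bn := Nat.mul_le_mul_right _ hYcard
          have h2 : (D.card - 1) * (n + 1) * Bn + (n + 1) * Bn ≤ (n + 1) * (p - 1) * Bn := by
            have : (D.card - 1) * (n + 1) + (n + 1) ≤ (n + 1) * (p - 1) := by
              have hD1 : D.card - 1 + 1 ≤ p - 1 := by omega
              calc (D.card - 1) * (n + 1) + (n + 1) = ((D.card - 1) + 1) * (n + 1) := by ring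
                _ ≤ (p - 1) * (n + 1) := Nat.mul_le_mul_right _ hD1
                _ = (n + 1) * (p - 1) := by ring
            calc (D.card - 1) * (n + 1) * Bn + (n + 1) * Bn
                = ((D.card - 1) * (n + 1) + (n + 1)) * Bn := by ring
              _ ≤ (n + 1) * (p - 1) * Bn := Nat.mul_le_mul_right _ this
          have hnb : 1 ≤ (n + 1) * Bn := by
            have := Nat.mul_le_mul (show 1 ≤ n + 1 by omega) hBnpos
            simpa using this
          rw [hfact] at hN1
          omega
        · have hnonemptycard : (F.filter (fun S => S.Nonempty)).card = F.card := by
            rw [Finset.filter_true_of_mem]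
            intro S hS
            rw [Finset.nonempty_iff_ne_empty]
            rintro rfl
            exact hemp hS
          have hYcard : Y.card ≤ D.card * (n + 1) := by
            calc Y.card ≤ ∑ E ∈ D, (id E).card := Finset.card_biUnion_le
              _ ≤ D.card * (n + 1) := by
                  apply Finset.sum_le_card_nsmul
                  intro E hE
                  exact hsz E (hDF hE)
          have h1 : F.card ≤ D.card * (n + 1) * Bn := by
            rw [← hnonemptycard]
            calc (F.filter (fun S => S.Nonempty)).card
                ≤ ∑ y ∈ Y, (F.filter (fun S => y ∈ S)).card := hdouble
              _ ≤ Y.card * Bn := hsum_le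
              _ ≤ D.card * (n + 1) * Bn := Nat.mul_le_mul_right _ hYcard
          have h2 : D.card * (n + 1) * Bn ≤ (n + 1) * (p - 1) * Bn := by
            apply Nat.mul_le_mul_right
            calc D.card * (n + 1) ≤ (p - 1) * (n + 1) :=
                Nat.mul_le_mul_right _ (by omega)
              _ = (n + 1) * (p - 1) := by ring
          rw [hfact] at hN1
          omega
      obtain ⟨y, _, hydeg⟩ := hbig
      set Fy := (F.filter (fun S => y ∈ S)).image (fun S => S.erase y) with hFy
      have hinj : Set.InjOn (fun S : Finset α => S.erase y)
          ↑(F.filter (fun S => y ∈ S)) := by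
        intro S hS T hT hST
        simp only [Finset.coe_filter, Set.mem_setOf_eq] at hS hT
        simp only at hST
        have := congrArg (insert y) hST
        simpa [Finset.insert_erase hS.2, Finset.insert_erase hT.2] using this
      have hFycard : Fy.card = (F.filter (fun S => y ∈ S)).card :=
        Finset.card_image_of_injOn hinj
      have hFysz : ∀ T ∈ Fy, T.card ≤ n := by
        intro T hT
        obtain ⟨S, hS, rfl⟩ := Finset.mem_image.1 hT
        rw [Finset.mem_filter] at hS
        rw [Finset.card_erase_of_mem hS.2]
        have := hsz S hS.1
        omega
      obtain ⟨P', hP'sub, hP'card, C', hC'⟩ := ih Fy hFysz (by omega)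
      have hynotmem : ∀ A ∈ P', y ∉ A := by
        intro A hA
        obtain ⟨S, _, rfl⟩ := Finset.mem_image.1 (hP'sub hA)
        exact Finset.notMem_erase y S
      refine ⟨P'.image (insert y ·), ?_, ?_, insert y C', ?_⟩
      · intro S hS
        obtain ⟨A, hA, rfl⟩ := Finset.mem_image.1 hS
        obtain ⟨T, hT, rfl⟩ := Finset.mem_image.1 (hP'sub hA)
        rw [Finset.mem_filter] at hT
        rw [Finset.insert_erase hT.2]
        exact hT.1
      · rw [Finset.card_image_of_injOn, hP'card]
        intro A hA B hB hAB
        have hyA : y ∉ A := hynotmem A hA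
        have hyB : y ∉ B := hynotmem B hB
        have := congrArg (fun S : Finset α => S.erase y) hAB
        simpa [Finset.erase_insert hyA, Finset.erase_insert hyB] using this
      · intro A hA B hB hAB
        obtain ⟨A', hA', rfl⟩ := Finset.mem_image.1 hA
        obtain ⟨B', hB', rfl⟩ := Finset.mem_image.1 hB
        have hne' : A' ≠ B' := by
          rintro rfl
          exact hAB rfl
        rw [← Finset.insert_inter_distrib, hC' A' hA' B' hB' hne']

end Helpers

section Machinery

variable {V : Type*} [Fintype V] [DecidableEq V] {G : SimpleGraph V} {W : Finset V} {k : ℕ}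

def Reach (G : SimpleGraph V) (W : Finset V) (k : ℕ) (A B : Finset V) : Prop :=
  ∃ ℓ σ, IsISRecSeqOn G W k A B ℓ σ

def GoodOn (G : SimpleGraph V) (W : Finset V) (k : ℕ) (A : Finset V) : Prop :=
  A ⊆ W ∧ IsIndep G A ∧ k - 1 ≤ A.card ∧ A.card ≤ k

lemma reach_refl {A : Finset V} (h : GoodOn G W k A) : Reach G W k A A := by
  refine ⟨0, fun _ => A, rfl, rfl, fun i _ => h, fun i hi => absurd hi (Nat.not_lt_zero i)⟩

lemma reach_single {A B : Finset V} (hA : GoodOn G W k A) (hB : GoodOn G W k B)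
    (hd : (symmDiff A B).card = 1) : Reach G W k A B := by
  refine ⟨1, fun i => if i = 0 then A else B, by simp, by simp, ?_, ?_⟩
  · intro i _
    dsimp only
    by_cases h : i = 0
    · rw [if_pos h]; exact hA
    · rw [if_neg h]; exact hB
  · intro i hi
    interval_cases i
    simpa using hd

lemma reach_trans {A B C : Finset V} (h1 : Reach G W k A B) (h2 : Reach G W k B C) :
    Reach G W k A C := by
  obtain ⟨ℓ₁, σ₁, e01, e11, g1, s1⟩ := h1
  obtain ⟨ℓ₂, σ₂, e02, e12, g2, s2⟩ := h2
  refine ⟨ℓ₁ + ℓ₂, fun i => if i ≤ ℓ₁ then σ₁ i else σ₂ (i - ℓ₁), by simp [e01], ?_, ?_, ?_⟩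
  · by_cases h : ℓ₁ + ℓ₂ ≤ ℓ₁
    · have hz : ℓ₂ = 0 := by omega
      subst hz
      simp only [if_pos h]
      rw [Nat.add_zero, e11, ← e02]
      exact e12
    · simp only [if_neg h]
      have : ℓ₁ + ℓ₂ - ℓ₁ = ℓ₂ := by omega
      rw [this, e12]
  · intro i hi
    by_cases h : i ≤ ℓ₁
    · simp only [if_pos h]; exact g1 i h
    · simp only [if_neg h]; exact g2 (i - ℓ₁) (by omega)
  · intro i hi
    by_cases h : i + 1 ≤ ℓ₁
    · simp only [if_pos h, if_pos (by omega : i ≤ ℓ₁)]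
      exact s1 i (by omega)
    · by_cases h' : i ≤ ℓ₁
      · have : i = ℓ₁ := by omega
        subst this
        simp only [if_pos le_rfl, if_neg h]
        have : i + 1 - i = 1 := by omega
        rw [this, e11, ← e02]
        exact s2 0 (by omega)
      · simp only [if_neg h, if_neg h']
        have : i + 1 - ℓ₁ = (i - ℓ₁) + 1 := by omega
        rw [this]
        exact s2 (i - ℓ₁) (by omega)

lemma reach_mono {W' : Finset V} (hW : W ⊆ W') {A B : Finset V} (h : Reach G W k A B) :
    Reach G W' k A B := by
  obtain ⟨ℓ, σ, e0, e1, g, s⟩ := h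
  exact ⟨ℓ, σ, e0, e1, fun i hi => ⟨(g i hi).1.trans hW, (g i hi).2⟩, s⟩


def Nb (G : SimpleGraph V) [DecidableRel G.Adj] (x : V) : Finset V :=
  insert x (G.neighborFinset x)

omit [Fintype V] in
lemma mem_Nb {G : SimpleGraph V} [DecidableRel G.Adj] [Fintype V] {x w : V} :
    x ∈ Nb G w ↔ (x = w ∨ G.Adj w x) := by
  simp [Nb, SimpleGraph.mem_neighborFinset]

omit [Fintype V] [DecidableEq V] in
lemma indep_subset {G : SimpleGraph V} {A B : Finset V} (h : IsIndep G A) (hBA : B ⊆ A) :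
    IsIndep G B := fun u hu w hw => h u (hBA hu) w (hBA hw)

omit [Fintype V] in
lemma indep_insert {G : SimpleGraph V} {A : Finset V} {x : V} (hA : IsIndep G A)
    (hx : ∀ y ∈ A, ¬ G.Adj x y) : IsIndep G (insert x A) := by
  intro u hu w hw
  rcases Finset.mem_insert.1 hu with rfl | hu'
  · rcases Finset.mem_insert.1 hw with rfl | hw'
    · exact fun h => G.irrefl h
    · exact hx w hw'
  · rcases Finset.mem_insert.1 hw with rfl | hw'
    · exact fun h => hx u hu' h.symm
    · exact hA u hu' w hw'

lemma surgery (G : SimpleGraph V) [DecidableRel G.Adj]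
    (k : ℕ) (hk : 2 ≤ k) (v : V) (WW Cr Is It : Finset V)
    (hvW : v ∉ WW) (hWcard : WW.card = 2 * k - 1)
    (hpair : ∀ x ∈ insert v WW, ∀ y ∈ insert v WW, x ≠ y → Nb G x ∩ Nb G y = Cr)
    (hvIs : v ∉ Is) (hvIt : v ∉ It)
    (ℓ : ℕ) (σ : ℕ → Finset V) (hσ : IsISRecSeqOn G Finset.univ k Is It ℓ σ) :
    Reach G (Finset.univ.erase v) k Is It := by
  classical
  obtain ⟨hs0, hsl, hgood, hstep⟩ := hσ
  have hcount : ∀ S : Finset V, S.card ≤ k → Cr ∩ S = ∅ → ∃ w ∈ WW, Nb G w ∩ S = ∅ := by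
    intro S hSk hCrS
    by_contra hno
    push_neg at hno
    have key : ∀ w, (w ∈ WW) → (Nb G w ∩ S).Nonempty := by
      intro w hw
      rw [Finset.nonempty_iff_ne_empty]
      exact Finset.nonempty_iff_ne_empty.1 (hno w hw)
    set f : V → V := fun w => if h : (Nb G w ∩ S).Nonempty then h.choose else v with hf
    have hfmem : ∀ w ∈ WW, f w ∈ Nb G w ∩ S := by
      intro w hw
      have h := key w hw
      rw [hf]
      dsimp only
      rw [dif_pos h]
      exact h.choose_spec
    have hinj : Set.InjOn f ↑WW := by
      intro w hw w' hw' heq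
      by_contra hne
      have h1 := hfmem w (by exact_mod_cast hw)
      have h2 := hfmem w' (by exact_mod_cast hw')
      rw [Finset.mem_inter] at h1 h2
      have hmm : f w ∈ Nb G w ∩ Nb G w' := Finset.mem_inter.2 ⟨h1.1, heq ▸ h2.1⟩
      rw [hpair w (Finset.mem_insert_of_mem (by exact_mod_cast hw))
        w' (Finset.mem_insert_of_mem (by exact_mod_cast hw')) hne] at hmm
      have : f w ∈ Cr ∩ S := Finset.mem_inter.2 ⟨hmm, h1.2⟩
      rw [hCrS] at this
      exact Finset.notMem_empty _ this
    have := Finset.card_le_card_of_injOn f (fun w hw => (Finset.mem_inter.1 (hfmem w hw)).2) hinj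
    omega
  have hCrNbv : Cr ⊆ Nb G v := by
    have hWne : WW.Nonempty := by
      rw [← Finset.card_pos]; omega
    obtain ⟨w, hw⟩ := hWne
    have hvw : v ≠ w := fun h => hvW (h ▸ hw)
    rw [← hpair v (Finset.mem_insert_self v WW) w (Finset.mem_insert_of_mem hw) hvw]
    exact Finset.inter_subset_left
  have hshape : ∀ i < ℓ, (∃ u, u ∉ σ i ∧ σ (i + 1) = insert u (σ i)) ∨
      (∃ u, u ∈ σ i ∧ σ (i + 1) = (σ i).erase u) := by
    intro i hi
    rcases card_sd_one (hstep i hi) with ⟨x, ⟨h1, h2⟩ | ⟨h1, h2⟩⟩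
    · exact Or.inl ⟨x, h1, h2⟩
    · exact Or.inr ⟨x, h1, h2⟩
  have hprev : ∀ m, 1 ≤ m → m ≤ ℓ → v ∈ σ m → (σ m).card = k - 1 →
      ∃ x, x ∉ σ m ∧ σ (m - 1) = insert x (σ m) ∧ v ∈ σ (m - 1) := by
    intro m h1 hml hv hc
    have hm1 : m - 1 < ℓ := by omega
    have hm11 : m - 1 + 1 = m := by omega
    rcases hshape (m - 1) hm1 with ⟨u, hu, he⟩ | ⟨u, hu, he⟩
    · rw [hm11] at he
      exfalso
      have hcard : (σ m).card = (σ (m - 1)).card + 1 := by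
        rw [he, Finset.card_insert_of_notMem hu]
      have h2 := (hgood (m - 1) (by omega)).2.2.1
      omega
    · rw [hm11] at he
      refine ⟨u, ?_, ?_, ?_⟩
      · rw [he]; exact Finset.notMem_erase u _
      · rw [he, Finset.insert_erase hu]
      · have : v ∈ (σ (m - 1)).erase u := he ▸ hv
        exact Finset.mem_of_mem_erase this
  have hnext : ∀ m, m < ℓ → v ∈ σ m → (σ m).card = k - 1 →
      ∃ u, u ∉ σ m ∧ σ (m + 1) = insert u (σ m) ∧ v ∈ σ (m + 1) := by
    intro m hml hv hc
    rcases hshape m hml with ⟨u, hu, he⟩ | ⟨u, hu, he⟩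
    · exact ⟨u, hu, he, by rw [he]; exact Finset.mem_insert_of_mem hv⟩
    · exfalso
      have hcard : (σ (m + 1)).card = (σ m).card - 1 := by
        rw [he, Finset.card_erase_of_mem hu]
      have h2 := (hgood (m + 1) (by omega)).2.2.1
      have hpos : 1 ≤ (σ m).card := Finset.card_pos.2 ⟨v, hv⟩
      omega
  have hgex : ∀ m, 1 ≤ m → m < ℓ → v ∈ σ m → (σ m).card = k - 1 →
      ∃ w ∈ WW, Nb G w ∩ ((σ (m - 1) ∪ σ (m + 1)).erase v) = ∅ := by
    intro m h1 h2 hv hc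
    obtain ⟨x, hx, hpeq, hvp⟩ := hprev m h1 (by omega) hv hc
    obtain ⟨u, hu, hneq, hvn⟩ := hnext m h2 hv hc
    apply hcount
    · have hsub : (σ (m - 1) ∪ σ (m + 1)).erase v ⊆
          insert x (insert u ((σ m).erase v)) := by
        intro y hy
        rw [Finset.mem_erase] at hy
        obtain ⟨hyv, hy2⟩ := hy
        rcases Finset.mem_union.1 hy2 with h | h
        · rw [hpeq] at h
          rcases Finset.mem_insert.1 h with rfl | h
          · exact Finset.mem_insert_self _ _
          · exact Finset.mem_insert_of_mem (Finset.mem_insert_of_mem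
              (Finset.mem_erase.2 ⟨hyv, h⟩))
        · rw [hneq] at h
          rcases Finset.mem_insert.1 h with rfl | h
          · exact Finset.mem_insert_of_mem (Finset.mem_insert_self _ _)
          · exact Finset.mem_insert_of_mem (Finset.mem_insert_of_mem
              (Finset.mem_erase.2 ⟨hyv, h⟩))
      have hc1 := Finset.card_le_card hsub
      have hc2 := (Finset.card_insert_le x (insert u ((σ m).erase v)))
      have hc3 := (Finset.card_insert_le u ((σ m).erase v))
      have hc4 : ((σ m).erase v).card = (σ m).card - 1 := Finset.card_erase_of_mem hv
      have hpos : 1 ≤ (σ m).card := Finset.card_pos.2 ⟨v, hv⟩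
      omega
    · rw [Finset.eq_empty_iff_forall_notMem]
      intro y hy
      rw [Finset.mem_inter, Finset.mem_erase] at hy
      obtain ⟨hyCr, hyne, hyU⟩ := hy
      have hyNb : y ∈ Nb G v := hCrNbv hyCr
      rcases mem_Nb.1 hyNb with rfl | hadj
      · exact hyne rfl
      · rcases Finset.mem_union.1 hyU with h | h
        · exact (hgood (m - 1) (by omega)).2.1 v hvp y h hadj
        · exact (hgood (m + 1) (by omega)).2.1 v hvn y h hadj
  set g : ℕ → V := fun m =>
    if h : ∃ w ∈ WW, Nb G w ∩ ((σ (m - 1) ∪ σ (m + 1)).erase v) = ∅ then h.choose else v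
    with hgdef
  have hgspec : ∀ m, (∃ w ∈ WW, Nb G w ∩ ((σ (m - 1) ∪ σ (m + 1)).erase v) = ∅) →
      g m ∈ WW ∧ Nb G (g m) ∩ ((σ (m - 1) ∪ σ (m + 1)).erase v) = ∅ := by
    intro m h
    rw [hgdef]
    dsimp only
    rw [dif_pos h]
    exact h.choose_spec
  set tg : ℕ → Finset V := fun m =>
    if v ∈ σ m then
      (if (σ m).card = k then (σ m).erase v else insert (g m) ((σ m).erase v))
    else σ m with htgdef
  have herase_sub : ∀ A : Finset V, A.erase v ⊆ Finset.univ.erase v := by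
    intro A x hx
    exact Finset.mem_erase.2 ⟨(Finset.mem_erase.1 hx).1, Finset.mem_univ x⟩
  have hGoodσ : ∀ i, i ≤ ℓ → v ∉ σ i → GoodOn G (Finset.univ.erase v) k (σ i) := by
    intro i hi hv
    refine ⟨fun x hx => Finset.mem_erase.2 ⟨fun h => hv (h ▸ hx), Finset.mem_univ x⟩,
      (hgood i hi).2.1, (hgood i hi).2.2⟩
  have main : ∀ m, m ≤ ℓ → Reach G (Finset.univ.erase v) k Is (tg m) := by
    intro m
    induction m with
    | zero =>
      intro _
      have : tg 0 = Is := by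
        rw [htgdef]
        dsimp only
        rw [hs0, if_neg hvIs]
      rw [this, ← hs0]
      exact reach_refl (hGoodσ 0 (Nat.zero_le ℓ) (hs0 ▸ hvIs))
    | succ m ih =>
      intro h
      have hm : m ≤ ℓ := by omega
      have hm' : m < ℓ := by omega
      refine reach_trans (ih hm) ?_
      have htgm : tg m = (if v ∈ σ m then
          (if (σ m).card = k then (σ m).erase v else insert (g m) ((σ m).erase v))
          else σ m) := by rw [htgdef]
      have htgm1 : tg (m + 1) = (if v ∈ σ (m + 1) then
          (if (σ (m + 1)).card = k then (σ (m + 1)).erase v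
            else insert (g (m + 1)) ((σ (m + 1)).erase v))
          else σ (m + 1)) := by rw [htgdef]
      rcases hshape m hm' with ⟨u, huA, hB⟩ | ⟨u, huA, hB⟩
      · -- insert move
        have hcards : (σ m).card = k - 1 ∧ (σ (m + 1)).card = k := by
          have h1 := (hgood m hm).2.2
          have h2 := (hgood (m + 1) h).2.2
          have h3 : (σ (m + 1)).card = (σ m).card + 1 := by
            rw [hB, Finset.card_insert_of_notMem huA]
          omega
        by_cases hvA : v ∈ σ m
        · -- v in σ m, so u ≠ v and v ∈ σ (m+1); substituted state at m
          have huv : u ≠ v := fun h' => huA (h' ▸ hvA)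
          have hvB : v ∈ σ (m + 1) := hB ▸ Finset.mem_insert_of_mem hvA
          have hm1 : 1 ≤ m := by
            rcases Nat.eq_zero_or_pos m with rfl | h'
            · exact absurd (hs0 ▸ hvA) hvIs
            · exact h'
          have hgx := hgspec m (hgex m hm1 hm' hvA hcards.1)
          obtain ⟨hgW, hgdisj⟩ := hgx
          set gw := g m
          have hgv : gw ≠ v := fun h' => hvW (h' ▸ hgW)
          -- u is in the protected set
          have hubig : u ∈ (σ (m - 1) ∪ σ (m + 1)).erase v :=
            Finset.mem_erase.2 ⟨huv, Finset.mem_union_right _ (hB ▸ Finset.mem_insert_self u _)⟩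
          have hnotNb : ∀ y ∈ (σ (m - 1) ∪ σ (m + 1)).erase v, y ∉ Nb G gw := by
            intro y hy hyNb
            have : y ∈ Nb G gw ∩ _ := Finset.mem_inter.2 ⟨hyNb, hy⟩
            rw [hgdisj] at this
            exact Finset.notMem_empty _ this
          have hsmsub : (σ m).erase v ⊆ (σ (m - 1) ∪ σ (m + 1)).erase v := by
            apply Finset.erase_subset_erase
            intro y hy
            exact Finset.mem_union_right _ (hB ▸ Finset.mem_insert_of_mem hy)
          have huNb : u ∉ Nb G gw := hnotNb u hubig
          have hgw_adj : ∀ y ∈ (σ m).erase v, ¬ G.Adj gw y := by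
            intro y hy hadj
            exact hnotNb y (hsmsub hy) (mem_Nb.2 (Or.inr hadj))
          have hgw_notmem : gw ∉ (σ m).erase v := by
            intro hmem
            exact hnotNb gw (hsmsub hmem) (mem_Nb.2 (Or.inl rfl))
          have hindep_m : IsIndep G ((σ m).erase v) :=
            indep_subset (hgood m hm).2.1 (Finset.erase_subset v _)
          have hcerase : ((σ m).erase v).card = k - 2 := by
            have := Finset.card_erase_of_mem (s := σ m) hvA
            omega
          set T0 := insert gw ((σ m).erase v) with hT0
          set T2 := insert u ((σ m).erase v) with hT2
          set T1 := insert u T0 with hT1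
          have htgmeq : tg m = T0 := by
            rw [htgm, if_pos hvA, if_neg (by omega)]
          have htgm1eq : tg (m + 1) = T2 := by
            rw [htgm1, if_pos hvB, if_pos hcards.2, hB, Finset.erase_insert_of_ne huv]
          have hGoodT0 : GoodOn G (Finset.univ.erase v) k T0 := by
            refine ⟨?_, indep_insert hindep_m hgw_adj, ?_, ?_⟩
            · rw [hT0]
              intro y hy
              rcases Finset.mem_insert.1 hy with rfl | hy'
              · exact Finset.mem_erase.2 ⟨hgv, Finset.mem_univ _⟩
              · exact herase_sub _ hy'
            · rw [hT0, Finset.card_insert_of_notMem hgw_notmem, hcerase]; omega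
            · rw [hT0, Finset.card_insert_of_notMem hgw_notmem, hcerase]; omega
          have huT0 : u ∉ T0 := by
            rw [hT0]
            intro hmem
            rcases Finset.mem_insert.1 hmem with h' | h'
            · exact huNb (h' ▸ mem_Nb.2 (Or.inl rfl))
            · exact huA (Finset.mem_of_mem_erase h')
          have hGoodT1 : GoodOn G (Finset.univ.erase v) k T1 := by
            refine ⟨?_, ?_, ?_, ?_⟩
            · rw [hT1]
              intro y hy
              rcases Finset.mem_insert.1 hy with rfl | hy'
              · exact Finset.mem_erase.2 ⟨huv, Finset.mem_univ _⟩
              · exact hGoodT0.1 hy'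
            · apply indep_insert hGoodT0.2.1
              intro y hy hadj
              rcases Finset.mem_insert.1 hy with rfl | hy'
              · exact huNb (mem_Nb.2 (Or.inr hadj.symm))
              · exact (hgood (m + 1) h).2.1 u (hB ▸ Finset.mem_insert_self u _) y
                  (hB ▸ Finset.mem_insert_of_mem (Finset.mem_of_mem_erase hy')) hadj
            · rw [hT1, Finset.card_insert_of_notMem huT0, hT0,
                Finset.card_insert_of_notMem hgw_notmem, hcerase]; omega
            · rw [hT1, Finset.card_insert_of_notMem huT0, hT0,
                Finset.card_insert_of_notMem hgw_notmem, hcerase]; omega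
          have hGoodT2 : GoodOn G (Finset.univ.erase v) k T2 := by
            rw [← htgm1eq, htgm1, if_pos hvB, if_pos hcards.2]
            refine ⟨herase_sub _, indep_subset (hgood (m + 1) h).2.1 (Finset.erase_subset v _), ?_, ?_⟩ <;>
            · have := Finset.card_erase_of_mem (s := σ (m + 1)) hvB
              omega
          have hT2T1 : T2 = T1.erase gw := by
            rw [hT1, hT0, Finset.insert_comm, Finset.erase_insert]
            intro hmem
            rcases Finset.mem_insert.1 hmem with h' | h'
            · exact huNb (h' ▸ mem_Nb.2 (Or.inl rfl))
            · exact hgw_notmem h'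
          have hgwT1 : gw ∈ T1 := by
            rw [hT1, hT0]
            exact Finset.mem_insert_of_mem (Finset.mem_insert_self _ _)
          rw [htgmeq, htgm1eq]
          refine reach_trans (reach_single hGoodT0 hGoodT1 ?_) (reach_single hGoodT1 hGoodT2 ?_)
          · rw [hT1]
            rw [sd_insert T0 u huT0]
            simp
          · rw [hT2T1, sd_erase T1 gw hgwT1]
            simp
        · -- v ∉ σ m
          by_cases huv : u = v
          · -- adding v : skip
            have huv' := huv.symm
            subst huv'
            have hvB : v ∈ σ (m + 1) := hB ▸ Finset.mem_insert_self v _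
            have : tg (m + 1) = tg m := by
              rw [htgm, htgm1, if_neg hvA, if_pos hvB, if_pos hcards.2, hB,
                Finset.erase_insert huA]
            rw [this]
            exact reach_refl (by rw [htgm, if_neg hvA]; exact hGoodσ m hm hvA)
          · have hvB : v ∉ σ (m + 1) := by
              rw [hB]
              intro hmem
              rcases Finset.mem_insert.1 hmem with h' | h'
              · exact huv h'.symm
              · exact hvA h'
            rw [htgm, htgm1, if_neg hvA, if_neg hvB]
            exact reach_single (hGoodσ m hm hvA) (hGoodσ (m + 1) h hvB) (hstep m hm')
      · -- erase move
        have hcards : (σ m).card = k ∧ (σ (m + 1)).card = k - 1 := by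
          have h1 := (hgood m hm).2.2
          have h2 := (hgood (m + 1) h).2.2
          have h3 : (σ (m + 1)).card = (σ m).card - 1 := by
            rw [hB, Finset.card_erase_of_mem huA]
          have hpos : 1 ≤ (σ m).card := Finset.card_pos.2 ⟨u, huA⟩
          omega
        by_cases huv : u = v
        · have huv' := huv.symm
          subst huv'
          have hvB : v ∉ σ (m + 1) := hB ▸ Finset.notMem_erase _ _
          have : tg (m + 1) = tg m := by
            rw [htgm, htgm1, if_pos huA, if_neg hvB, if_pos hcards.1, hB]
          rw [this, htgm, if_pos huA, if_pos hcards.1, ← hB]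
          exact reach_refl (hGoodσ (m + 1) h hvB)
        · by_cases hvA : v ∈ σ m
          · -- remove u ≠ v while v stays: install substitute g (m+1)
            have hvB : v ∈ σ (m + 1) := hB ▸ Finset.mem_erase.2 ⟨fun h' => huv h'.symm, hvA⟩
            have hm1l : m + 1 < ℓ := by
              rcases Nat.lt_or_ge (m + 1) ℓ with h' | h'
              · exact h'
              · exfalso
                have he : m + 1 = ℓ := by omega
                have hvB' := hvB
                rw [he, hsl] at hvB'
                exact hvIt hvB'
            have hgx := hgspec (m + 1) (by
              have := hgex (m + 1) (by omega) hm1l hvB hcards.2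
              simpa using this)
            rw [Nat.add_sub_cancel] at hgx
            obtain ⟨hgW, hgdisj⟩ := hgx
            set gw := g (m + 1)
            have hgv : gw ≠ v := fun h' => hvW (h' ▸ hgW)
            have hnotNb : ∀ y ∈ (σ m ∪ σ (m + 2)).erase v, y ∉ Nb G gw := by
              intro y hy hyNb
              have : y ∈ Nb G gw ∩ _ := Finset.mem_inter.2 ⟨hyNb, hy⟩
              rw [hgdisj] at this
              exact Finset.notMem_empty _ this
            have hsmsub : (σ m).erase v ⊆ (σ m ∪ σ (m + 2)).erase v :=
              Finset.erase_subset_erase v Finset.subset_union_left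
            have hgw_adj : ∀ y ∈ (σ m).erase v, ¬ G.Adj gw y := by
              intro y hy hadj
              exact hnotNb y (hsmsub hy) (mem_Nb.2 (Or.inr hadj))
            have hgw_notmem : gw ∉ (σ m).erase v := by
              intro hmem
              exact hnotNb gw (hsmsub hmem) (mem_Nb.2 (Or.inl rfl))
            have hindep_m : IsIndep G ((σ m).erase v) :=
              indep_subset (hgood m hm).2.1 (Finset.erase_subset v _)
            have hcerase : ((σ m).erase v).card = k - 1 := by
              rw [Finset.card_erase_of_mem hvA, hcards.1]
            set T0 := (σ m).erase v with hT0
            set T1 := insert gw T0 with hT1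
            set T2 := insert gw ((σ (m + 1)).erase v) with hT2
            have htgmeq : tg m = T0 := by rw [htgm, if_pos hvA, if_pos hcards.1]
            have htgm1eq : tg (m + 1) = T2 := by
              rw [htgm1, if_pos hvB, if_neg (by omega)]
            have huT0 : u ∈ T0 := Finset.mem_erase.2 ⟨huv, huA⟩
            have hugw : u ≠ gw := by
              intro h'
              exact hnotNb gw (hsmsub (h' ▸ huT0)) (mem_Nb.2 (Or.inl rfl))
            have hGoodT0 : GoodOn G (Finset.univ.erase v) k T0 := by
              refine ⟨herase_sub _, hindep_m, ?_, ?_⟩ <;> rw [hcerase] <;> omega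
            have hGoodT1 : GoodOn G (Finset.univ.erase v) k T1 := by
              refine ⟨?_, indep_insert hindep_m hgw_adj, ?_, ?_⟩
              · rw [hT1]
                intro y hy
                rcases Finset.mem_insert.1 hy with rfl | hy'
                · exact Finset.mem_erase.2 ⟨hgv, Finset.mem_univ _⟩
                · exact herase_sub _ hy'
              · rw [hT1, Finset.card_insert_of_notMem hgw_notmem, hcerase]; omega
              · rw [hT1, Finset.card_insert_of_notMem hgw_notmem, hcerase]; omega
            have hT2T1 : T2 = T1.erase u := by
              rw [hT1, hT2, Finset.erase_insert_of_ne (Ne.symm hugw), hT0, hB,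
                Finset.erase_right_comm]
            have hGoodT2 : GoodOn G (Finset.univ.erase v) k T2 := by
              refine ⟨?_, ?_, ?_, ?_⟩
              · rw [hT2T1]
                intro y hy
                exact hGoodT1.1 (Finset.mem_of_mem_erase hy)
              · rw [hT2T1]
                exact indep_subset hGoodT1.2.1 (Finset.erase_subset u _)
              · rw [hT2T1, Finset.card_erase_of_mem (by
                  rw [hT1]; exact Finset.mem_insert_of_mem huT0), hT1,
                  Finset.card_insert_of_notMem hgw_notmem, hcerase]
                omega
              · rw [hT2T1, Finset.card_erase_of_mem (by
                  rw [hT1]; exact Finset.mem_insert_of_mem huT0), hT1,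
                  Finset.card_insert_of_notMem hgw_notmem, hcerase]
                omega
            rw [htgmeq, htgm1eq]
            refine reach_trans (reach_single hGoodT0 hGoodT1 ?_) (reach_single hGoodT1 hGoodT2 ?_)
            · rw [hT1, sd_insert T0 gw hgw_notmem]
              simp
            · rw [hT2T1, sd_erase T1 u (by rw [hT1]; exact Finset.mem_insert_of_mem huT0)]
              simp
          · have hvB : v ∉ σ (m + 1) := by
              intro h'
              rw [hB] at h'
              exact hvA (Finset.mem_of_mem_erase h')
            rw [htgm, htgm1, if_neg hvA, if_neg hvB]
            exact reach_single (hGoodσ m hm hvA) (hGoodσ (m + 1) h hvB) (hstep m hm')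
  have hfinal : tg ℓ = It := by
    rw [htgdef]
    dsimp only
    rw [hsl, if_neg hvIt]
  rw [← hfinal]
  exact main ℓ le_rfl


lemma twin (G : SimpleGraph V) [DecidableRel G.Adj] (k : ℕ)
    (w1 w2 : V) (hne : w1 ≠ w2) (hNb : Nb G w1 = Nb G w2)
    (Is It : Finset V)
    (h1Is : w1 ∉ Is) (h1It : w1 ∉ It)
    (ℓ : ℕ) (σ : ℕ → Finset V) (hσ : IsISRecSeqOn G Finset.univ k Is It ℓ σ) :
    ∃ ℓ' σ', IsISRecSeqOn G (Finset.univ.erase w1) k Is It ℓ' σ' := by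
  classical
  obtain ⟨hs0, hsl, hgood, hstep⟩ := hσ
  have hadj12 : G.Adj w1 w2 := by
    have : w2 ∈ Nb G w1 := by rw [hNb]; exact mem_Nb.2 (Or.inl rfl)
    rcases mem_Nb.1 this with h | h
    · exact absurd h.symm hne
    · exact h
  -- adjacency transfer
  have htrans : ∀ x, G.Adj w2 x → (x = w1 ∨ G.Adj w1 x) := by
    intro x hx
    have : x ∈ Nb G w1 := by rw [hNb]; exact mem_Nb.2 (Or.inr hx)
    exact mem_Nb.1 this
  set F : Finset V → Finset V :=
    fun S => if w1 ∈ S then insert w2 (S.erase w1) else S with hF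
  have hFid : ∀ S, w1 ∉ S → F S = S := by
    intro S h
    rw [hF]; dsimp only; rw [if_neg h]
  have hFin : ∀ S, w1 ∈ S → F S = insert w2 (S.erase w1) := by
    intro S h
    rw [hF]; dsimp only; rw [if_pos h]
  have hw2notmem : ∀ S, IsIndep G S → w1 ∈ S → w2 ∉ S := by
    intro S hind h1 h2
    exact hind w1 h1 w2 h2 hadj12
  refine ⟨ℓ, fun i => F (σ i), ?_, ?_, ?_, ?_⟩
  · show F (σ 0) = Is
    rw [hs0]; exact hFid Is h1Is
  · show F (σ ℓ) = It
    rw [hsl]; exact hFid It h1It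
  · intro i hi
    dsimp only
    obtain ⟨-, hind, hc1, hc2⟩ := hgood i hi
    by_cases h1 : w1 ∈ σ i
    · rw [hFin _ h1]
      have hw2 : w2 ∉ (σ i).erase w1 := fun h => hw2notmem _ hind h1 (Finset.mem_of_mem_erase h)
      have hcard : (insert w2 ((σ i).erase w1)).card = (σ i).card := by
        rw [Finset.card_insert_of_notMem hw2, Finset.card_erase_of_mem h1]
        have : 1 ≤ (σ i).card := Finset.card_pos.2 ⟨w1, h1⟩
        omega
      refine ⟨?_, ?_, by omega, by omega⟩
      · intro y hy
        rcases Finset.mem_insert.1 hy with rfl | hy'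
        · exact Finset.mem_erase.2 ⟨Ne.symm hne, Finset.mem_univ _⟩
        · exact Finset.mem_erase.2 ⟨(Finset.mem_erase.1 hy').1, Finset.mem_univ _⟩
      · intro a ha b hb hab
        rcases Finset.mem_insert.1 ha with rfl | ha'
        · rcases Finset.mem_insert.1 hb with rfl | hb'
          · exact G.irrefl hab
          · rcases htrans b hab with rfl | h
            · exact (Finset.mem_erase.1 hb').1 rfl
            · exact hind w1 h1 b (Finset.mem_of_mem_erase hb') h
        · rcases Finset.mem_insert.1 hb with rfl | hb'
          · rcases htrans a hab.symm with rfl | h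
            · exact (Finset.mem_erase.1 ha').1 rfl
            · exact hind w1 h1 a (Finset.mem_of_mem_erase ha') h
          · exact hind a (Finset.mem_of_mem_erase ha') b (Finset.mem_of_mem_erase hb') hab
    · rw [hFid _ h1]
      refine ⟨?_, hind, hc1, hc2⟩
      intro y hy
      exact Finset.mem_erase.2 ⟨fun h => h1 (h ▸ hy), Finset.mem_univ _⟩
  · intro i hi
    dsimp only
    have hindA := (hgood i (by omega)).2.1
    have hindB := (hgood (i + 1) (by omega)).2.1
    rcases card_sd_one (hstep i hi) with ⟨u, ⟨huA, hB⟩ | ⟨huA, hB⟩⟩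
    · -- insert move
      by_cases h1 : w1 ∈ σ i
      · have h1B : w1 ∈ σ (i + 1) := hB ▸ Finset.mem_insert_of_mem h1
        have huw1 : u ≠ w1 := fun h => huA (h ▸ h1)
        have huw2 : u ≠ w2 := by
          rintro rfl
          exact hindB w1 (hB ▸ Finset.mem_insert_of_mem h1) u
            (hB ▸ Finset.mem_insert_self u _) hadj12
        rw [hFin _ h1, hFin _ h1B, hB, Finset.erase_insert_of_ne huw1,
          Finset.insert_comm]
        have hu' : u ∉ insert w2 ((σ i).erase w1) := by
          intro h
          rcases Finset.mem_insert.1 h with h' | h'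
          · exact huw2 h'
          · exact huA (Finset.mem_of_mem_erase h')
        rw [sd_insert _ u hu']
        simp
      · by_cases huw1 : u = w1
        · subst huw1
          have h1B : u ∈ σ (i + 1) := hB ▸ Finset.mem_insert_self u _
          rw [hFid _ h1, hFin _ h1B, hB, Finset.erase_insert h1]
          have hw2A : w2 ∉ σ i := by
            intro h
            exact hindB u (hB ▸ Finset.mem_insert_self u _) w2
              (hB ▸ Finset.mem_insert_of_mem h) hadj12
          rw [sd_insert _ w2 hw2A]
          simp
        · have h1B : w1 ∉ σ (i + 1) := by
            rw [hB]
            intro h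
            rcases Finset.mem_insert.1 h with h' | h'
            · exact huw1 h'.symm
            · exact h1 h'
          rw [hFid _ h1, hFid _ h1B]
          exact hstep i hi
    · -- erase move
      by_cases huw1 : u = w1
      · subst huw1
        have h1B : u ∉ σ (i + 1) := hB ▸ Finset.notMem_erase _ _
        rw [hFin _ huA, hFid _ h1B, hB]
        have hw2A : w2 ∉ (σ i).erase u := fun h =>
          hw2notmem _ hindA huA (Finset.mem_of_mem_erase h)
        rw [symmDiff_comm, sd_insert _ w2 hw2A]
        simp
      · by_cases h1 : w1 ∈ σ i
        · have h1B : w1 ∈ σ (i + 1) :=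
            hB ▸ Finset.mem_erase.2 ⟨fun h => huw1 h.symm, h1⟩
          have hw2A : w2 ∉ σ i := hw2notmem _ hindA h1
          have huw2 : u ≠ w2 := fun h => hw2A (h ▸ huA)
          rw [hFin _ h1, hFin _ h1B, hB, Finset.erase_right_comm,
            ← Finset.erase_insert_of_ne (Ne.symm huw2)]
          have hu' : u ∈ insert w2 ((σ i).erase w1) :=
            Finset.mem_insert_of_mem (Finset.mem_erase.2 ⟨huw1, huA⟩)
          rw [sd_erase _ u hu']
          simp
        · have h1B : w1 ∉ σ (i + 1) := by
            intro h
            rw [hB] at h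
            exact h1 (Finset.mem_of_mem_erase h)
          rw [hFid _ h1, hFid _ h1B]
          exact hstep i hi


end Machinery

/-- If a `d`-degenerate graph has more than `(2d+1)! * (2k-1)^(2d+1)` vertices of
degree at most `2d` outside `I_s ∪ I_t`, then some vertex `v ∉ I_s ∪ I_t` is
irrelevant: there is a reconfiguration sequence from `I_s` to `I_t` in `G`
iff there is one in `G - v`. -/
theorem isr_degenerate_irrelevant_vertex {V : Type*} [Fintype V] [DecidableEq V]
    (G : SimpleGraph V) [DecidableRel G.Adj] (d k : ℕ) (hk : 0 < k)
    (hdeg : Degenerate G d)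
    (Is It : Finset V) (hIs : IsIndep G Is) (hIt : IsIndep G It)
    (hIsCard : Is.card = k) (hItCard : It.card = k)
    (hB : ((Finset.univ \ (Is ∪ It)).filter (fun v => G.degree v ≤ 2 * d)).card >
      Nat.factorial (2 * d + 1) * (2 * k - 1) ^ (2 * d + 1)) :
    ∃ v ∈ Finset.univ \ (Is ∪ It),
      ((∃ ℓ σ, IsISRecSeqOn G Finset.univ k Is It ℓ σ) ↔
       (∃ ℓ σ, IsISRecSeqOn G (Finset.univ.erase v) k Is It ℓ σ)) := by
  classical
  set B' := ((Finset.univ : Finset V) \ (Is ∪ It)).filter (fun v => G.degree v ≤ 2 * d)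
    with hB'def
  have hB'sub : ∀ b ∈ B', b ∈ Finset.univ \ (Is ∪ It) := by
    intro b hb
    exact Finset.mem_sdiff.2 ⟨Finset.mem_univ b, (Finset.mem_sdiff.1
      (Finset.filter_subset _ _ hb)).2⟩
  have hB'IsIt : ∀ b ∈ B', b ∉ Is ∧ b ∉ It := by
    intro b hb
    have := (Finset.mem_sdiff.1 (hB'sub b hb)).2
    rw [Finset.mem_union] at this
    push_neg at this
    exact this
  rcases eq_or_lt_of_le (show 1 ≤ k from hk) with hk1 | hk2
  · -- k = 1 : both sides always true
    have hk1' : k = 1 := hk1.symm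
    subst hk1'
    have hpos : 0 < B'.card := by
      have := hB
      omega
    obtain ⟨v, hv⟩ := Finset.card_pos.1 hpos
    obtain ⟨hvIs, hvIt⟩ := hB'IsIt v hv
    refine ⟨v, hB'sub v hv, ?_⟩
    have mk : ∀ W : Finset V, Is ⊆ W → It ⊆ W →
        ∃ ℓ σ, IsISRecSeqOn G W 1 Is It ℓ σ := by
      intro W hIsW hItW
      refine ⟨2, fun i => if i = 0 then Is else if i = 1 then ∅ else It, by simp, by simp, ?_, ?_⟩
      · intro i hi
        interval_cases i
        · simpa [hIsCard] using ⟨hIsW, hIs⟩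
        · simp
          exact fun u hu => absurd hu (Finset.notMem_empty u)
        · simpa [hItCard] using ⟨hItW, hIt⟩
      · intro i hi
        interval_cases i
        · have : symmDiff Is (∅ : Finset V) = Is := by
            simp [symmDiff_eq_sup_sdiff_inf]
          simpa [this] using hIsCard
        · have : symmDiff (∅ : Finset V) It = It := by
            simp [symmDiff_eq_sup_sdiff_inf]
          simpa [this] using hItCard
    have hIsE : Is ⊆ Finset.univ.erase v := fun x hx =>
      Finset.mem_erase.2 ⟨fun h => hvIs (h ▸ hx), Finset.mem_univ x⟩
    have hItE : It ⊆ Finset.univ.erase v := fun x hx =>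
      Finset.mem_erase.2 ⟨fun h => hvIt (h ▸ hx), Finset.mem_univ x⟩
    exact ⟨fun _ => mk _ hIsE hItE, fun _ => mk _ (Finset.subset_univ Is) (Finset.subset_univ It)⟩
  · -- k ≥ 2
    have hk' : 2 ≤ k := hk2
    by_cases hinj : ∀ a ∈ B', ∀ b ∈ B', Nb G a = Nb G b → a = b
    · -- injective closed neighborhoods : sunflower argument
      set Fam := B'.image (Nb G) with hFam
      have hFamcard : Fam.card = B'.card := by
        apply Finset.card_image_of_injOn
        intro a ha b hb hab
        exact hinj a (by exact_mod_cast ha) b (by exact_mod_cast hb) hab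
      have hsz : ∀ S ∈ Fam, S.card ≤ 2 * d + 1 := by
        intro S hS
        obtain ⟨b, hb, rfl⟩ := Finset.mem_image.1 hS
        have hbdeg : G.degree b ≤ 2 * d := (Finset.mem_filter.1 hb).2
        have hnm : b ∉ G.neighborFinset b := by
          rw [SimpleGraph.mem_neighborFinset]
          exact G.irrefl
        rw [Nb, Finset.card_insert_of_notMem hnm, SimpleGraph.card_neighborFinset_eq_degree]
        omega
      obtain ⟨P, hPF, hPcard, Cr, hCore⟩ := sunflower_lemma_s4 (2 * k) (by omega) (2 * d + 1)
        Fam hsz (by rw [hFamcard]; exact hB)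
      set WW0 := B'.filter (fun b => Nb G b ∈ P) with hWW0
      have hWW0sub : WW0 ⊆ B' := Finset.filter_subset _ _
      have him : WW0.image (Nb G) = P := by
        apply Finset.Subset.antisymm
        · intro S hS
          obtain ⟨b, hb, rfl⟩ := Finset.mem_image.1 hS
          exact (Finset.mem_filter.1 hb).2
        · intro S hS
          obtain ⟨b, hb, rfl⟩ := Finset.mem_image.1 (hPF hS)
          exact Finset.mem_image.2 ⟨b, Finset.mem_filter.2 ⟨hb, hS⟩, rfl⟩
      have hWW0card : WW0.card = 2 * k := by
        have : (WW0.image (Nb G)).card = WW0.card := by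
          apply Finset.card_image_of_injOn
          intro a ha b hb hab
          exact hinj a (by exact_mod_cast hWW0sub (by exact_mod_cast ha))
            b (by exact_mod_cast hWW0sub (by exact_mod_cast hb)) hab
        rw [← this, him, hPcard]
      have hWW0ne : WW0.Nonempty := Finset.card_pos.1 (by omega)
      obtain ⟨v, hv⟩ := hWW0ne
      have hvB' : v ∈ B' := hWW0sub hv
      obtain ⟨hvIs, hvIt⟩ := hB'IsIt v hvB'
      refine ⟨v, hB'sub v hvB', ?_⟩
      constructor
      · rintro ⟨ℓ, σ, hσ⟩
        apply surgery G k hk' v (WW0.erase v) Cr Is It (Finset.notMem_erase v WW0)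
          (by rw [Finset.card_erase_of_mem hv, hWW0card])
          ?_ hvIs hvIt ℓ σ hσ
        intro x hx y hy hxy
        rw [Finset.insert_erase hv] at hx hy
        have hNbne : Nb G x ≠ Nb G y := by
          intro h
          exact hxy (hinj x (hWW0sub hx) y (hWW0sub hy) h)
        exact hCore (Nb G x) (him ▸ Finset.mem_image_of_mem _ hx)
          (Nb G y) (him ▸ Finset.mem_image_of_mem _ hy) hNbne
      · rintro ⟨ℓ, σ, hσ⟩
        exact reach_mono (Finset.erase_subset v Finset.univ) ⟨ℓ, σ, hσ⟩
    · -- twin vertices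
      push_neg at hinj
      obtain ⟨a, ha, b, hb, hNbeq, hab⟩ := hinj
      obtain ⟨haIs, haIt⟩ := hB'IsIt a ha
      refine ⟨a, hB'sub a ha, ?_⟩
      constructor
      · rintro ⟨ℓ, σ, hσ⟩
        exact twin G k a b hab hNbeq Is It haIs haIt ℓ σ hσ
      · rintro ⟨ℓ, σ, hσ⟩
        exact reach_mono (Finset.erase_subset a Finset.univ) ⟨ℓ, σ, hσ⟩
end

section
/- Let G be a graph, let I_s, I_t ⊆ V(G), let B ⊆ V(G) \ (I_s ∪ I_t), and let A' ⊆ V(G) \ (I_s ∪ I_t ∪ B) be a set of at least two vertices such that: (i) all vertices of A' have the same neighborhood in I_s ∪ I_t and the same neighborhood in B (i.e., for all u, v ∈ A', N_G(u) ∩ (I_s ∪ I_t) = N_G(v) ∩ (I_s ∪ I_t) and N_G(u) ∩ B = N_G(v) ∩ B), and (ii) A' is 2-scattered in the induced subgraph G[V(G) \ (I_s ∪ I_t ∪ B)]. Then the closed neighborhoods {N_G[a] : a ∈ A'} form a sunflower with |A'| petals (all petals nonempty) whose core is contained in B ∪ I_s ∪ I_t. -/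
/-- `u` belongs to the `r`-neighborhood `N^r_{G[W]}[v]` of `v` in the induced
subgraph `G[W]`, i.e. there is a walk from `u` to `v` in `G` of length at most
`r` all of whose vertices lie in `W`. -/
def InBallOn {V : Type*} (G : SimpleGraph V) (W : Finset V) (r : ℕ) (v u : V) :
    Prop :=
  ∃ p : G.Walk u v, p.length ≤ r ∧ ∀ x ∈ p.support, x ∈ W

lemma inBallOn_self {V : Type*} (G : SimpleGraph V) (W : Finset V) (r : ℕ)
    (v : V) (hv : v ∈ W) : InBallOn G W r v v :=
  ⟨SimpleGraph.Walk.nil, by simp, by simp [hv]⟩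

lemma inBallOn_adj {V : Type*} (G : SimpleGraph V) (W : Finset V)
    {v x : V} (h : G.Adj v x) (hv : v ∈ W) (hx : x ∈ W) : InBallOn G W 2 v x :=
  ⟨SimpleGraph.Walk.cons h.symm SimpleGraph.Walk.nil, by simp, by
    intro y hy
    simp only [SimpleGraph.Walk.support_cons, SimpleGraph.Walk.support_nil,
      List.mem_cons, List.mem_singleton, List.not_mem_nil, or_false] at hy
    rcases hy with rfl | rfl
    · exact hx
    · exact hv⟩

/-- Let `B ⊆ V(G) \ (I_s ∪ I_t)` and let `A' ⊆ V(G) \ (I_s ∪ I_t ∪ B)` be a set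
of at least two vertices all having the same neighborhood in `I_s ∪ I_t` and the
same neighborhood in `B`, which is `2`-scattered in `G[V(G) \ (I_s ∪ I_t ∪ B)]`.
Then the closed neighborhoods of the vertices of `A'` form a sunflower with
`|A'|` nonempty petals whose core is contained in `B ∪ I_s ∪ I_t`. -/
theorem scattered_same_nbhd_sunflower {V : Type*} [Fintype V] [DecidableEq V]
    (G : SimpleGraph V) [DecidableRel G.Adj]
    (Is It B A' : Finset V)
    (hB : B ⊆ Finset.univ \ (Is ∪ It))
    (hA' : A' ⊆ Finset.univ \ (Is ∪ It ∪ B))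
    (hA'card : 2 ≤ A'.card)
    (hsameIsIt : ∀ u ∈ A', ∀ v ∈ A',
      G.neighborFinset u ∩ (Is ∪ It) = G.neighborFinset v ∩ (Is ∪ It))
    (hsameB : ∀ u ∈ A', ∀ v ∈ A',
      G.neighborFinset u ∩ B = G.neighborFinset v ∩ B)
    (hscat : ∀ u ∈ A', ∀ w ∈ A', u ≠ w → ∀ x : V,
      ¬ (InBallOn G (Finset.univ \ (Is ∪ It ∪ B)) 2 u x ∧
         InBallOn G (Finset.univ \ (Is ∪ It ∪ B)) 2 w x)) :
    ∃ Y : Finset V, Y ⊆ B ∪ Is ∪ It ∧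
      (∀ a ∈ A', ∀ a' ∈ A', a ≠ a' →
        closedNbhd G a ∩ closedNbhd G a' = Y) ∧
      (∀ a ∈ A', (closedNbhd G a \ Y).Nonempty) := by
  obtain ⟨a₀, ha₀⟩ := Finset.card_pos.mp (by omega : 0 < A'.card)
  set W : Finset V := Finset.univ \ (Is ∪ It ∪ B) with hW
  have hmemW : ∀ a ∈ A', a ∈ W := fun a ha => hA' ha
  set Y : Finset V := G.neighborFinset a₀ ∩ (Is ∪ It ∪ B) with hYdef
  have hYeq : ∀ a ∈ A', G.neighborFinset a ∩ (Is ∪ It ∪ B) = Y := by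
    intro a ha
    calc G.neighborFinset a ∩ (Is ∪ It ∪ B)
        = G.neighborFinset a ∩ (Is ∪ It) ∪ G.neighborFinset a ∩ B := by
          exact Finset.inter_union_distrib_left _ _ _
      _ = G.neighborFinset a₀ ∩ (Is ∪ It) ∪ G.neighborFinset a₀ ∩ B := by
          rw [hsameIsIt a ha a₀ ha₀, hsameB a ha a₀ ha₀]
      _ = Y := (Finset.inter_union_distrib_left _ _ _).symm
  have hYsub : Y ⊆ B ∪ Is ∪ It := by
    intro x hx
    rw [hYdef, Finset.mem_inter] at hx
    have := hx.2
    simp only [Finset.mem_union] at this ⊢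
    tauto
  refine ⟨Y, hYsub, ?_, ?_⟩
  · intro a ha a' ha' hne
    apply Finset.Subset.antisymm
    · intro x hx
      rw [Finset.mem_inter, closedNbhd, closedNbhd, Finset.mem_insert,
        Finset.mem_insert] at hx
      obtain ⟨h1, h2⟩ := hx
      rcases h1 with h1 | h1 <;> rcases h2 with h2 | h2
      · exact absurd (h1.symm.trans h2) hne
      · rw [SimpleGraph.mem_neighborFinset, h1] at h2
        exact absurd ⟨inBallOn_self G W 2 a (hmemW a ha),
          inBallOn_adj G W h2 (hmemW a' ha') (hmemW a ha)⟩
          (hscat a ha a' ha' hne a)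
      · rw [SimpleGraph.mem_neighborFinset, h2] at h1
        exact absurd ⟨inBallOn_adj G W h1 (hmemW a ha) (hmemW a' ha'),
          inBallOn_self G W 2 a' (hmemW a' ha')⟩
          (hscat a ha a' ha' hne a')
      · by_cases hxW : x ∈ W
        · rw [SimpleGraph.mem_neighborFinset] at h1 h2
          exact absurd ⟨inBallOn_adj G W h1 (hmemW a ha) hxW,
            inBallOn_adj G W h2 (hmemW a' ha') hxW⟩
            (hscat a ha a' ha' hne x)
        · have hxI : x ∈ Is ∪ It ∪ B := by
            by_contra hc
            exact hxW (Finset.mem_sdiff.mpr ⟨Finset.mem_univ x, hc⟩)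
          rw [← hYeq a ha]
          exact Finset.mem_inter.mpr ⟨h1, hxI⟩
    · intro x hxY
      have h1 : x ∈ G.neighborFinset a := by
        have : x ∈ G.neighborFinset a ∩ (Is ∪ It ∪ B) := by
          rw [hYeq a ha]; exact hxY
        exact (Finset.mem_inter.mp this).1
      have h2 : x ∈ G.neighborFinset a' := by
        have : x ∈ G.neighborFinset a' ∩ (Is ∪ It ∪ B) := by
          rw [hYeq a' ha']; exact hxY
        exact (Finset.mem_inter.mp this).1
      rw [Finset.mem_inter, closedNbhd, closedNbhd]
      exact ⟨Finset.mem_insert_of_mem h1, Finset.mem_insert_of_mem h2⟩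
  · intro a ha
    refine ⟨a, Finset.mem_sdiff.mpr ⟨Finset.mem_insert_self _ _, ?_⟩⟩
    intro haY
    have := hYsub haY
    have haW := hmemW a ha
    simp only [hW, Finset.mem_sdiff, Finset.mem_union] at haW this
    tauto
end

section
/- Let G be a graph, C a domination core of G, k a positive integer, and D_s, D_t dominating sets of G of size k. Suppose u and v are distinct vertices of V(G) \ (C ∪ D_s ∪ D_t) with N_G(u) ∩ C = N_G(v) ∩ C. Then for every reconfiguration sequence σ from D_s to D_t in G there exists a reconfiguration sequence σ' from D_s to D_t in G whose length is at most the length of σ and which does not touch u. -/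
open Finset



/-- `D` is a dominating set of the induced subgraph `G[W]`: `D ⊆ W` and every
vertex of `W` is in `D` or adjacent (in `G`) to a vertex of `D`. -/
def DominatesOn {V : Type*} (G : SimpleGraph V) (W D : Finset V) : Prop :=
  D ⊆ W ∧ ∀ w ∈ W, w ∈ D ∨ ∃ u ∈ D, G.Adj u w

/-- `C` is a domination core of `G`: a set `D` is a dominating set of `G` iff
`D` dominates `C`, i.e. `C ⊆ N_G[D]`. -/
def IsDomCore {V : Type*} [Fintype V] (G : SimpleGraph V) (C : Finset V) : Prop :=
  ∀ D : Finset V,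
    DominatesOn G Finset.univ D ↔ (∀ c ∈ C, c ∈ D ∨ ∃ u ∈ D, G.Adj u c)

/-- A reconfiguration sequence of dominating sets (between `Ds` and `Dt`, with
sizes in `{k, k+1}`, consecutive sets differing in exactly one vertex) inside
the induced subgraph `G[W]`, of length `ℓ`, given by `σ 0, σ 1, …, σ ℓ`. -/
def IsDSRecSeqOn {V : Type*} [DecidableEq V] (G : SimpleGraph V) (W : Finset V)
    (k : ℕ) (Ds Dt : Finset V) (ℓ : ℕ) (σ : ℕ → Finset V) : Prop :=
  σ 0 = Ds ∧ σ ℓ = Dt ∧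
  (∀ i ≤ ℓ, DominatesOn G W (σ i) ∧ k ≤ (σ i).card ∧ (σ i).card ≤ k + 1) ∧
  (∀ i < ℓ, (symmDiff (σ i) (σ (i + 1))).card = 1)

-- structure of a symmDiff of size 1
lemma symm_one {V : Type*} [DecidableEq V] {s t : Finset V}
    (h : (symmDiff s t).card = 1) :
    (∃ a ∉ s, t = insert a s) ∨ (∃ a ∉ t, s = insert a t) := by
  obtain ⟨w, hw⟩ := Finset.card_eq_one.mp h
  have hmem : ∀ x, x ∈ symmDiff s t ↔ x = w := by
    intro x; rw [hw]; simp
  by_cases hws : w ∈ s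
  · right
    have hwt : w ∉ t := by
      have := (hmem w).mpr rfl
      rw [Finset.mem_symmDiff] at this
      tauto
    refine ⟨w, hwt, ?_⟩
    ext x
    by_cases hx : x = w
    · subst hx; simp [hws]
    · have := (hmem x)
      rw [Finset.mem_symmDiff] at this
      simp [Finset.mem_insert, hx]
      tauto
  · left
    have hwt : w ∈ t := by
      have := (hmem w).mpr rfl
      rw [Finset.mem_symmDiff] at this
      tauto
    refine ⟨w, hws, ?_⟩
    ext x
    by_cases hx : x = w
    · subst hx; simp [hwt]
    · have := (hmem x)
      rw [Finset.mem_symmDiff] at this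
      simp [Finset.mem_insert, hx]
      tauto

lemma dedup {V : Type*} [DecidableEq V] {P : Finset V → Prop} :
    ∀ ℓ : ℕ, ∀ τ : ℕ → Finset V, (∀ i ≤ ℓ, P (τ i)) →
      (∀ i < ℓ, (symmDiff (τ i) (τ (i+1))).card ≤ 1) →
      ∃ ℓ' ≤ ℓ, ∃ σ' : ℕ → Finset V, σ' 0 = τ 0 ∧ σ' ℓ' = τ ℓ ∧
        (∀ i ≤ ℓ', P (σ' i)) ∧ (∀ i < ℓ', (symmDiff (σ' i) (σ' (i+1))).card = 1) := by
  intro ℓ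
  induction ℓ with
  | zero =>
    intro τ hP _
    exact ⟨0, le_refl 0, τ, rfl, rfl, hP, fun i h => absurd h (Nat.not_lt_zero i)⟩
  | succ n ih =>
    intro τ hP hD
    obtain ⟨ℓ', hℓ', σ', h0, hend, hP', hD'⟩ := ih (fun i => τ (i+1))
      (fun i hi => hP (i+1) (by omega)) (fun i hi => hD (i+1) (by omega))
    by_cases h : (symmDiff (τ 0) (τ 1)).card = 1
    · refine ⟨ℓ'+1, by omega, fun i => if i = 0 then τ 0 else σ' (i-1), by simp, ?_, ?_, ?_⟩
      · simpa using hend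
      · intro i hi
        by_cases hi0 : i = 0
        · subst hi0; simpa using hP 0 (by omega)
        · simp only [if_neg hi0]
          exact hP' (i-1) (by omega)
      · intro i hi
        by_cases hi0 : i = 0
        · subst hi0
          simpa [h0] using h
        · have h1 : i - 1 + 1 = i + 1 - 1 := by omega
          simp only [if_neg hi0, if_neg (by omega : ¬ (i+1 = 0))]
          have := hD' (i-1) (by omega)
          rwa [show i - 1 + 1 = (i+1) - 1 by omega] at this
    · have hcard : (symmDiff (τ 0) (τ 1)).card = 0 := by
        have := hD 0 (by omega); norm_num at this; omega
      have heq : τ 0 = τ 1 := by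
        have : symmDiff (τ 0) (τ 1) = ∅ := Finset.card_eq_zero.mp hcard
        have := symmDiff_eq_bot.mp this
        exact this
      exact ⟨ℓ', by omega, σ', by rw [h0, ← heq], hend, hP', hD'⟩

lemma dom_superset {V : Type*} [Fintype V] [DecidableEq V] (G : SimpleGraph V)
    {D E : Finset V} (h : DominatesOn G Finset.univ D) (hDE : D ⊆ E) :
    DominatesOn G Finset.univ E := by
  refine ⟨Finset.subset_univ _, fun w hw => ?_⟩
  rcases h.2 w hw with h1 | ⟨x, hx, hadj⟩
  · exact Or.inl (hDE h1)
  · exact Or.inr ⟨x, hDE hx, hadj⟩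

/-- If `u, v` are distinct vertices outside `C ∪ D_s ∪ D_t` with the same
neighborhood in the domination core `C`, then every reconfiguration sequence
from `D_s` to `D_t` can be replaced by one of at most the same length that does
not touch `u`. -/
theorem dsr_avoid_twin_vertex {V : Type*} [Fintype V] [DecidableEq V]
    (G : SimpleGraph V) [DecidableRel G.Adj] (k : ℕ) (hk : 0 < k)
    (C : Finset V) (hC : IsDomCore G C)
    (Ds Dt : Finset V)
    (hDs : DominatesOn G Finset.univ Ds) (hDt : DominatesOn G Finset.univ Dt)
    (hDsCard : Ds.card = k) (hDtCard : Dt.card = k)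
    (u v : V) (huv : u ≠ v)
    (hu : u ∉ C ∪ Ds ∪ Dt) (hv : v ∉ C ∪ Ds ∪ Dt)
    (hnbr : G.neighborFinset u ∩ C = G.neighborFinset v ∩ C) :
    ∀ ℓ σ, IsDSRecSeqOn G Finset.univ k Ds Dt ℓ σ →
      ∃ ℓ' ≤ ℓ, ∃ σ', IsDSRecSeqOn G Finset.univ k Ds Dt ℓ' σ' ∧
        ∀ i < ℓ', u ∉ symmDiff (σ' i) (σ' (i + 1)) := by
  simp only [Finset.mem_union, not_or] at hu
  obtain ⟨⟨huC, huDs⟩, huDt⟩ := hu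
  intro ℓ σ hσ
  obtain ⟨h0, hend, hdomσ, hstep⟩ := hσ
  set f : V → V := fun w => if w = u then v else w with hf
  have hfu : f u = v := by simp [hf]
  have hfne : ∀ w, w ≠ u → f w = w := fun w hw => by simp [hf, hw]
  have hfnu : ∀ w, f w ≠ u := by
    intro w
    by_cases hw : w = u
    · subst hw; rw [hfu]; exact (Ne.symm huv)
    · rw [hfne w hw]; exact hw
  set A : ℕ → Finset V := fun i => (σ i).image f with hA
  -- basic facts about images
  have himg_id : ∀ s : Finset V, u ∉ s → s.image f = s := by
    intro s hs
    rw [Finset.image_congr (g := id), Finset.image_id]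
    intro w hw
    exact hfne w (fun h => hs (h ▸ hw))
  have hA0 : A 0 = Ds := by rw [hA]; simp only [h0]; exact himg_id Ds huDs
  have hAl : A ℓ = Dt := by rw [hA]; simp only [hend]; exact himg_id Dt huDt
  have hAu : ∀ i, u ∉ A i := by
    intro i hi
    obtain ⟨w, _, hw⟩ := Finset.mem_image.mp hi
    exact hfnu w hw
  have hAle : ∀ i, (A i).card ≤ (σ i).card := fun i => Finset.card_image_le
  have hAge : ∀ i, (σ i).card - 1 ≤ (A i).card := by
    intro i
    have hsub : (σ i).erase u ⊆ A i := by
      intro w hw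
      have hwne : w ≠ u := Finset.ne_of_mem_erase hw
      exact Finset.mem_image.mpr ⟨w, Finset.mem_of_mem_erase hw, hfne w hwne⟩
    calc (σ i).card - 1 ≤ ((σ i).erase u).card := Finset.pred_card_le_card_erase
      _ ≤ (A i).card := Finset.card_le_card hsub
  have hAdom : ∀ i ≤ ℓ, DominatesOn G Finset.univ (A i) := by
    intro i hi
    refine (hC (A i)).mpr (fun c hc => ?_)
    rcases (hC (σ i)).mp (hdomσ i hi).1 c hc with hcs | ⟨x, hx, hadj⟩
    · left
      exact Finset.mem_image.mpr ⟨c, hcs, hfne c (fun h => huC (h ▸ hc))⟩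
    · by_cases hxu : x = u
      · have hadj' : G.Adj u c := by rw [hxu] at hadj; exact hadj
        have hcv : c ∈ G.neighborFinset v ∩ C := by
          rw [← hnbr]
          exact Finset.mem_inter.mpr ⟨(SimpleGraph.mem_neighborFinset _ _ _).mpr hadj', hc⟩
        right
        exact ⟨v, Finset.mem_image.mpr ⟨x, hx, by rw [hxu]; exact hfu⟩,
          (SimpleGraph.mem_neighborFinset _ _ _).mp (Finset.mem_inter.mp hcv).1⟩
      · exact Or.inr ⟨x, Finset.mem_image.mpr ⟨x, hx, hfne x hxu⟩, hadj⟩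
  have hAstep : ∀ i < ℓ, (symmDiff (A i) (A (i+1))).card ≤ 1 := by
    intro i hi
    have hsub : symmDiff (A i) (A (i+1)) ⊆ (symmDiff (σ i) (σ (i+1))).image f := by
      intro x hx
      rw [Finset.mem_symmDiff] at hx
      rcases hx with ⟨hx1, hx2⟩ | ⟨hx1, hx2⟩
      · obtain ⟨a, ha, hax⟩ := Finset.mem_image.mp hx1
        have : a ∉ σ (i+1) := fun h => hx2 (Finset.mem_image.mpr ⟨a, h, hax⟩)
        exact Finset.mem_image.mpr ⟨a, Finset.mem_symmDiff.mpr (Or.inl ⟨ha, this⟩), hax⟩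
      · obtain ⟨a, ha, hax⟩ := Finset.mem_image.mp hx1
        have : a ∉ σ i := fun h => hx2 (Finset.mem_image.mpr ⟨a, h, hax⟩)
        exact Finset.mem_image.mpr ⟨a, Finset.mem_symmDiff.mpr (Or.inr ⟨ha, this⟩), hax⟩
    calc (symmDiff (A i) (A (i+1))).card
        ≤ ((symmDiff (σ i) (σ (i+1))).image f).card := Finset.card_le_card hsub
      _ ≤ (symmDiff (σ i) (σ (i+1))).card := Finset.card_image_le
      _ = 1 := hstep i hi
  -- badness structure
  have hbadpos : ∀ i ≤ ℓ, (A i).card < k → 0 < i ∧ i < ℓ := by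
    intro i hi hbad
    constructor
    · rcases Nat.eq_zero_or_pos i with h | h
      · exfalso; rw [h, hA0, hDsCard] at hbad; omega
      · exact h
    · rcases Nat.lt_or_ge i ℓ with h | h
      · exact h
      · exfalso
        have : i = ℓ := le_antisymm hi h
        rw [this, hAl, hDtCard] at hbad; omega
  have hkey : ∀ i j, i ≤ ℓ → j ≤ ℓ → (A i).card < k →
      (symmDiff (σ i) (σ j)).card = 1 → (symmDiff (A i) (A j)).card ≤ 1 →
      ∃ a ∉ A i, insert a (A i) = A j := by
    intro i j hi hj hbad hsd hsdA
    have hσik : (σ i).card = k := by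
      have h1 := hAge i
      have h2 := (hdomσ i hi).2.1
      have h3 := (hdomσ i hi).2.2
      omega
    have hAik : (A i).card = k - 1 := by
      have := hAge i; omega
    -- σ i ⊆ σ j with card j = k + 1
    have hσsub : σ i ⊆ σ j ∧ (σ j).card = k + 1 := by
      rcases symm_one hsd with ⟨a, ha, haeq⟩ | ⟨a, ha, haeq⟩
      · constructor
        · rw [haeq]; exact Finset.subset_insert a _
        · rw [haeq, Finset.card_insert_of_notMem ha, hσik]
      · exfalso
        have := (hdomσ j hj).2.1
        rw [haeq, Finset.card_insert_of_notMem ha] at hσik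
        omega
    have hAsub : A i ⊆ A j := Finset.image_subset_image hσsub.1
    have hAjge : k ≤ (A j).card := by
      have := hAge j; rw [hσsub.2] at this; omega
    have hAjle : (A j).card ≤ (A i).card + 1 := by
      have hdiff : symmDiff (A i) (A j) = A j \ A i := by
        rw [symmDiff_def]
        have : A i \ A j = ∅ := Finset.sdiff_eq_empty_iff_subset.mpr hAsub
        simp [this, Finset.sup_eq_union]
      have h1 : (A j \ A i).card ≤ 1 := by rw [← hdiff]; exact hsdA
      have := Finset.card_sdiff_of_subset hAsub
      omega
    have : (A i).card + 1 = (A j).card := by omega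
    exact Finset.exists_eq_insert_iff.mpr ⟨hAsub, this⟩
  -- the repaired sequence
  set τ : ℕ → Finset V := fun i => if (A i).card < k then A (i-1) ∪ A (i+1) else A i
    with hτ
  have hτ0 : τ 0 = Ds := by
    rw [hτ]; simp only [if_neg (by rw [hA0, hDsCard]; omega : ¬ (A 0).card < k)]
    exact hA0
  have hτl : τ ℓ = Dt := by
    rw [hτ]; simp only [if_neg (by rw [hAl, hDtCard]; omega : ¬ (A ℓ).card < k)]
    exact hAl
  -- structure at a bad index
  have hbadstruct : ∀ i ≤ ℓ, (A i).card < k →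
      (∃ a ∉ A i, insert a (A i) = A (i-1)) ∧ (∃ b ∉ A i, insert b (A i) = A (i+1)) ∧
      0 < i ∧ i < ℓ := by
    intro i hi hbad
    obtain ⟨hpos, hlt⟩ := hbadpos i hi hbad
    have h1 : ∃ a ∉ A i, insert a (A i) = A (i-1) := by
      apply hkey i (i-1) hi (by omega) hbad
      · have := hstep (i-1) (by omega)
        rw [show i - 1 + 1 = i by omega] at this
        rwa [symmDiff_comm]
      · have := hAstep (i-1) (by omega)
        rw [show i - 1 + 1 = i by omega] at this
        rwa [symmDiff_comm]
    have h2 : ∃ b ∉ A i, insert b (A i) = A (i+1) :=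
      hkey i (i+1) hi (by omega) hbad (hstep i hlt) (hAstep i hlt)
    exact ⟨h1, h2, hpos, hlt⟩
  -- properties of τ
  have hτP : ∀ i ≤ ℓ, DominatesOn G Finset.univ (τ i) ∧ k ≤ (τ i).card ∧
      (τ i).card ≤ k + 1 ∧ u ∉ τ i := by
    intro i hi
    by_cases hbad : (A i).card < k
    · obtain ⟨⟨a, ha, haeq⟩, ⟨b, hb, hbeq⟩, hpos, hlt⟩ := hbadstruct i hi hbad
      have hτi : τ i = insert a (A i) ∪ insert b (A i) := by
        rw [hτ]; simp only [if_pos hbad, ← haeq, ← hbeq]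
      have hAik : (A i).card = k - 1 := by have := hAge i; have := (hdomσ i hi).2.1; omega
      refine ⟨?_, ?_, ?_, ?_⟩
      · exact dom_superset G (hAdom (i-1) (by omega))
          (by rw [hτi, haeq]; exact Finset.subset_union_left)
      · calc k = (insert a (A i)).card := by
              rw [Finset.card_insert_of_notMem ha, hAik]; omega
          _ ≤ (τ i).card := Finset.card_le_card (by rw [hτi]; exact Finset.subset_union_left)
      · have : τ i ⊆ insert a (insert b (A i)) := by
          rw [hτi]; intro x hx
          rcases Finset.mem_union.mp hx with h | h <;> simp at h ⊢ <;> tauto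
        calc (τ i).card ≤ (insert a (insert b (A i))).card := Finset.card_le_card this
          _ ≤ (A i).card + 2 := by
              calc (insert a (insert b (A i))).card ≤ (insert b (A i)).card + 1 :=
                    Finset.card_insert_le _ _
                _ ≤ (A i).card + 2 := by have := Finset.card_insert_le b (A i); omega
          _ ≤ k + 1 := by omega
      · rw [hτi]
        intro hmem
        rcases Finset.mem_union.mp hmem with h | h
        · rw [haeq] at h; exact hAu _ h
        · rw [hbeq] at h; exact hAu _ h
    · have hτi : τ i = A i := by rw [hτ]; simp only [if_neg hbad]
      rw [hτi]
      refine ⟨hAdom i hi, by omega, ?_, hAu i⟩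
      have h1 := hAle i
      have h2 := (hdomσ i hi).2.2
      omega
  have hτstep : ∀ i < ℓ, (symmDiff (τ i) (τ (i+1))).card ≤ 1 := by
    intro i hi
    by_cases hbi : (A i).card < k
    · obtain ⟨⟨a, ha, haeq⟩, ⟨b, hb, hbeq⟩, hpos, hlt⟩ := hbadstruct i (le_of_lt hi) hbi
      have hAik : (A i).card = k - 1 := by
        have := hAge i; have := (hdomσ i (le_of_lt hi)).2.1; omega
      have hbi1 : ¬ (A (i+1)).card < k := by
        rw [← hbeq, Finset.card_insert_of_notMem hb]; omega
      have hτi : τ i = insert a (A i) ∪ insert b (A i) := by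
        rw [hτ]; simp only [if_pos hbi, ← haeq, ← hbeq]
      have hτi1 : τ (i+1) = insert b (A i) := by
        rw [hτ]; simp only [if_neg hbi1]; exact hbeq.symm
      have hsub : symmDiff (τ i) (τ (i+1)) ⊆ {a} := by
        rw [hτi, hτi1]
        intro x hx
        rw [Finset.mem_symmDiff] at hx
        simp only [Finset.mem_union, Finset.mem_insert, Finset.mem_singleton] at hx ⊢
        tauto
      calc (symmDiff (τ i) (τ (i+1))).card ≤ ({a} : Finset V).card :=
            Finset.card_le_card hsub
        _ = 1 := Finset.card_singleton a
    · by_cases hbi1 : (A (i+1)).card < k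
      · obtain ⟨⟨a, ha, haeq⟩, ⟨b, hb, hbeq⟩, hpos, hlt⟩ :=
          hbadstruct (i+1) (by omega) hbi1
        have haeq' : insert a (A (i+1)) = A i := by
          rwa [show i + 1 - 1 = i by omega] at haeq
        have hτi : τ i = insert a (A (i+1)) := by
          rw [hτ]; simp only [if_neg hbi]; exact haeq'.symm
        have hτi1 : τ (i+1) = insert a (A (i+1)) ∪ insert b (A (i+1)) := by
          rw [hτ]; simp only [if_pos hbi1, show i + 1 - 1 = i by omega, ← haeq', ← hbeq]
        have hsub : symmDiff (τ i) (τ (i+1)) ⊆ {b} := by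
          rw [hτi, hτi1]
          intro x hx
          rw [Finset.mem_symmDiff] at hx
          simp only [Finset.mem_union, Finset.mem_insert, Finset.mem_singleton] at hx ⊢
          tauto
        calc (symmDiff (τ i) (τ (i+1))).card ≤ ({b} : Finset V).card :=
              Finset.card_le_card hsub
          _ = 1 := Finset.card_singleton b
      · have hτi : τ i = A i := by rw [hτ]; simp only [if_neg hbi]
        have hτi1 : τ (i+1) = A (i+1) := by rw [hτ]; simp only [if_neg hbi1]
        rw [hτi, hτi1]
        exact hAstep i hi
  obtain ⟨ℓ', hℓ', σ', hs0, hsend, hP', hD'⟩ :=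
    dedup (P := fun s => DominatesOn G Finset.univ s ∧ k ≤ s.card ∧ s.card ≤ k + 1 ∧ u ∉ s)
      ℓ τ hτP hτstep
  refine ⟨ℓ', hℓ', σ',
    ⟨by rw [hs0, hτ0], by rw [hsend, hτl],
      fun i hi => ⟨(hP' i hi).1, (hP' i hi).2.1, (hP' i hi).2.2.1⟩, hD'⟩, ?_⟩
  intro i hi hmem
  rw [Finset.mem_symmDiff] at hmem
  rcases hmem with ⟨h1, _⟩ | ⟨h1, _⟩
  · exact (hP' i (le_of_lt hi)).2.2.2 h1
  · exact (hP' (i+1) hi).2.2.2 h1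
end
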